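/- arXiv:2208.07020 — 11 statements merged into one kernel-verified Lean document; each statement's English description precedes it below -/
import Mathlib

section
/- Let G be a finite simple connected graph. Then the dominator chromatic number satisfies χ_d(G) = 2 if and only if there exist positive integers a and b such that G is isomorphic to the complete bipartite graph K_{a,b}. -/
/-!
In a dominator coloring with two classes, a vertex that dominates its own class is alone in it,
and otherwise it is adjacent to the whole other class. If both classes are singletons,
connectivity makes their two vertices adjacent; in every case the two classes are completely
joined, so `G` is `K_{a,b}` with the classes as sides. Conversely the two sides of `K_{a,b}` form
a dominator coloring, and no graph with an edge has a proper coloring with fewer than two classes.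
-/

open SimpleGraph

section Defs

variable {V : Type*} (G : SimpleGraph V)

/-- `D` is a dominating set of `G`: every vertex outside `D` has a neighbor in `D`. -/
def IsDomSet (D : Set V) : Prop := ∀ v, v ∉ D → ∃ u ∈ D, G.Adj u v

/-- `D` is a total dominating set of `G`: every vertex has a neighbor in `D`. -/
def IsTotalDomSet (D : Set V) : Prop := ∀ v, ∃ u ∈ D, G.Adj u v

/-- The domination number `γ(G)`. -/
noncomputable def domNum [Fintype V] : ℕ :=
  sInf {n | ∃ D : Set V, IsDomSet G D ∧ D.ncard = n}

/-- The total domination number `γ_t(G)`. -/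
noncomputable def totalDomNum [Fintype V] : ℕ :=
  sInf {n | ∃ D : Set V, IsTotalDomSet G D ∧ D.ncard = n}

/-- `C` is a proper coloring of `G` with exactly `k` color classes:
a partition of the vertex set into `k` nonempty independent sets. -/
def IsProperColoring {k : ℕ} (C : Fin k → Set V) : Prop :=
  (∀ v, ∃! i, v ∈ C i) ∧ (∀ i, (C i).Nonempty) ∧
    (∀ i, ∀ u ∈ C i, ∀ w ∈ C i, ¬ G.Adj u w)

/-- `v` dominates the color class `S`: every vertex of `S` is in the
closed neighborhood of `v`. -/
def DominatesClass (v : V) (S : Set V) : Prop := ∀ u ∈ S, u = v ∨ G.Adj v u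

/-- A dominator coloring: a proper coloring in which every vertex dominates
at least one color class. -/
def IsDominatorColoring {k : ℕ} (C : Fin k → Set V) : Prop :=
  IsProperColoring G C ∧ ∀ v, ∃ i, DominatesClass G v (C i)

/-- A dominated coloring: a proper coloring in which every color class has a
dominating vertex, i.e. a vertex adjacent to every vertex of the class. -/
def IsDominatedColoring {k : ℕ} (C : Fin k → Set V) : Prop :=
  IsProperColoring G C ∧ ∀ i, ∃ v, ∀ u ∈ C i, G.Adj v u

/-- The dominator chromatic number `χ_d(G)`. -/
noncomputable def domChromNum : ℕ :=
  sInf {k | ∃ C : Fin k → Set V, IsDominatorColoring G C}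

/-- The dominated chromatic number `χ_dom(G)`. -/
noncomputable def dominatedChromNum : ℕ :=
  sInf {k | ∃ C : Fin k → Set V, IsDominatedColoring G C}

/-- `G` is a `D(k)` graph: `γ(G) = χ(G) = χ_d(G) = k`. -/
def IsDk [Fintype V] (k : ℕ) : Prop :=
  domNum G = k ∧ G.chromaticNumber = (k : ℕ∞) ∧ domChromNum G = k

end Defs

namespace SimpleGraph

variable {V : Type*} {G : SimpleGraph V}

lemma nonempty_iso_completeBipartiteGraph {S : Set V} (hS : G.IsIndepSet S)
    (hSc : G.IsIndepSet Sᶜ) (hSSc : G.IsCompleteBetween S Sᶜ) :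
    Nonempty (G ≃g completeBipartiteGraph S ↥Sᶜ) := by
  classical
  refine ⟨RelIso.symm ⟨Equiv.Set.sumCompl S, ?_⟩⟩
  rintro (⟨x, hx⟩ | ⟨x, hx⟩) (⟨y, hy⟩ | ⟨y, hy⟩)
  · simpa using fun hxy => hS hx hy (G.ne_of_adj hxy) hxy
  · simpa using hSSc hx hy
  · simpa using (hSSc hy hx).symm
  · simpa using fun hxy => hSc hx hy (G.ne_of_adj hxy) hxy

lemma exists_iso_completeBipartiteGraph_fin {α β : Type*} [Finite α] [Finite β] [Nonempty α]
    [Nonempty β] (e : G ≃g completeBipartiteGraph α β) :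
    ∃ a b : ℕ, 0 < a ∧ 0 < b ∧ Nonempty (G ≃g completeBipartiteGraph (Fin a) (Fin b)) :=
  ⟨Nat.card α, Nat.card β, Nat.card_pos, Nat.card_pos,
    ⟨e.trans (completeBipartiteGraphCongr (Finite.equivFin α) (Finite.equivFin β))⟩⟩

end SimpleGraph

section Coloring

variable {V W : Type*} {G : SimpleGraph V} {H : SimpleGraph W} {k : ℕ} {C : Fin k → Set V}

lemma IsProperColoring.isIndepSet (hC : IsProperColoring G C) (i : Fin k) :
    G.IsIndepSet (C i) :=
  fun u hu w hw _ => hC.2.2 i u hu w hw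

lemma IsProperColoring.eq_of_mem (hC : IsProperColoring G C) {v : V} {i j : Fin k}
    (hi : v ∈ C i) (hj : v ∈ C j) : i = j :=
  (hC.1 v).unique hi hj

lemma IsProperColoring.two_le_of_adj (hC : IsProperColoring G C) {u v : V} (huv : G.Adj u v) :
    2 ≤ k := by
  obtain ⟨i, hi, -⟩ := hC.1 u
  obtain ⟨j, hj, -⟩ := hC.1 v
  have hij : i.val ≠ j.val := fun h => hC.2.2 i u hi v (Fin.ext h ▸ hj) huv
  omega

lemma IsProperColoring.compl_zero {C : Fin 2 → Set V} (hC : IsProperColoring G C) :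
    (C 0)ᶜ = C 1 := by
  ext v
  obtain ⟨i, hi, -⟩ := hC.1 v
  constructor
  · intro hv0
    fin_cases i
    exacts [absurd hi hv0, hi]
  · exact fun hv1 hv0 => absurd (hC.eq_of_mem hv0 hv1) (by decide)

lemma DominatesClass.subset_singleton (hC : IsProperColoring G C) {v : V} {i : Fin k}
    (hv : v ∈ C i) (hd : DominatesClass G v (C i)) : C i ⊆ {v} :=
  fun u hu => (hd u hu).resolve_right (hC.2.2 i v hv u hu)

lemma DominatesClass.adj_of_ne (hC : IsProperColoring G C) {v : V} {i j : Fin k}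
    (hv : v ∈ C i) (hij : i ≠ j) (hd : DominatesClass G v (C j)) : ∀ u ∈ C j, G.Adj v u :=
  fun u hu => (hd u hu).resolve_left fun huv => hij (hC.eq_of_mem hv (huv ▸ hu))

lemma IsDominatorColoring.subset_singleton_or_adj {C : Fin 2 → Set V}
    (hC : IsDominatorColoring G C) {v : V} {i : Fin 2} (hv : v ∈ C i) :
    C i ⊆ {v} ∨ ∀ u ∈ C (1 - i), G.Adj v u := by
  obtain ⟨j, hj⟩ := hC.2 v
  by_cases hij : i = j
  · exact .inl (DominatesClass.subset_singleton hC.1 hv (hij ▸ hj))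
  · have : j = 1 - i := by fin_cases i <;> fin_cases j <;> simp_all
    exact .inr (this ▸ DominatesClass.adj_of_ne hC.1 hv hij hj)

lemma IsDominatorColoring.isCompleteBetween {C : Fin 2 → Set V} (hC : IsDominatorColoring G C)
    (hG : G.Connected) : G.IsCompleteBetween (C 0) (C 1) := by
  intro x hx y hy
  rcases hC.subset_singleton_or_adj hx with hx0 | hxadj
  · rcases hC.subset_singleton_or_adj hy with hy1 | hyadj
    · -- both classes are singletons, so the neighbour of `x` given by connectivity is `y`
      have hxy : x ≠ y := fun h => absurd (hC.1.eq_of_mem hx (h ▸ hy)) (by decide)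
      have : Nontrivial V := ⟨⟨x, y, hxy⟩⟩
      obtain ⟨u, hxu⟩ := hG.preconnected.exists_adj_of_nontrivial x
      have hu : u ∈ C 1 := hC.1.compl_zero ▸ fun hu0 => G.ne_of_adj hxu (hx0 hu0).symm
      exact (hy1 hu : u = y) ▸ hxu
    · exact (hyadj x hx).symm
  · exact hxadj y hy

lemma IsDominatorColoring.comap (e : G ≃g H) {C : Fin k → Set W}
    (hC : IsDominatorColoring H C) : IsDominatorColoring G fun i => e ⁻¹' C i := by
  refine ⟨⟨fun v => hC.1.1 (e v), fun i => (hC.1.2.1 i).preimage e.surjective,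
    fun i u hu w hw huw => hC.1.2.2 i _ hu _ hw (e.map_adj_iff.2 huw)⟩, fun v => ?_⟩
  obtain ⟨i, hi⟩ := hC.2 (e v)
  exact ⟨i, fun u hu => (hi (e u) hu).imp (fun h => e.injective h) e.map_adj_iff.1⟩

lemma domChromNum_congr (e : G ≃g H) : domChromNum G = domChromNum H := by
  unfold domChromNum
  congr 1
  ext k
  exact ⟨fun ⟨C, hC⟩ => ⟨_, hC.comap e.symm⟩, fun ⟨C, hC⟩ => ⟨_, hC.comap e⟩⟩

lemma exists_isDominatorColoring_of_domChromNum_eq (h : domChromNum G = k) (hk : k ≠ 0) :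
    ∃ C : Fin k → Set V, IsDominatorColoring G C :=
  h ▸ Nat.sInf_mem (Nat.nonempty_of_pos_sInf (h ▸ Nat.pos_of_ne_zero hk))

lemma domChromNum_eq_of_isDominatorColoring (hC : IsDominatorColoring G C)
    (hmin : ∀ m (C' : Fin m → Set V), IsDominatorColoring G C' → k ≤ m) : domChromNum G = k :=
  le_antisymm (Nat.sInf_le ⟨C, hC⟩) (le_csInf ⟨k, C, hC⟩ fun m ⟨C', hC'⟩ => hmin m C' hC')

lemma domChromNum_completeBipartiteGraph (α β : Type*) [Nonempty α] [Nonempty β] :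
    domChromNum (completeBipartiteGraph α β) = 2 := by
  obtain ⟨a⟩ := ‹Nonempty α›
  obtain ⟨b⟩ := ‹Nonempty β›
  let C : Fin 2 → Set (α ⊕ β) := ![{x | x.isLeft}, {x | x.isRight}]
  have hC : IsDominatorColoring (completeBipartiteGraph α β) C := by
    refine ⟨⟨?_, ?_, ?_⟩, ?_⟩
    · rintro (x | x) <;> simp [C, ExistsUnique, Fin.forall_fin_two]
    · simpa [C, Fin.forall_fin_two] using ⟨⟨.inl a, rfl⟩, ⟨.inr b, rfl⟩⟩
    · simp [C, Fin.forall_fin_two]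
    · rintro (x | x)
      · exact ⟨1, by simp [C, DominatesClass]⟩
      · exact ⟨0, by simp [C, DominatesClass]⟩
  have hab : (completeBipartiteGraph α β).Adj (.inl a) (.inr b) := by simp
  exact domChromNum_eq_of_isDominatorColoring hC fun _ _ hC' => hC'.1.two_le_of_adj hab

end Coloring

/-- For a finite simple connected graph `G`, `χ_d(G) = 2` iff `G`
is isomorphic to a complete bipartite graph `K_{a,b}` with `a, b ≥ 1`. -/
theorem stmt_0 {V : Type*} [Fintype V] (G : SimpleGraph V) (hconn : G.Connected) :
    domChromNum G = 2 ↔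
      ∃ a b : ℕ, 0 < a ∧ 0 < b ∧
        Nonempty (G ≃g completeBipartiteGraph (Fin a) (Fin b)) := by
  constructor
  · intro h
    obtain ⟨C, hC⟩ := exists_isDominatorColoring_of_domChromNum_eq h two_ne_zero
    have hcompl := hC.1.compl_zero
    obtain ⟨e⟩ := nonempty_iso_completeBipartiteGraph (hC.1.isIndepSet 0)
      (hcompl ▸ hC.1.isIndepSet 1) (hcompl ▸ hC.isCompleteBetween hconn)
    have : Nonempty (C 0) := (hC.1.2.1 0).to_subtype
    have : Nonempty ↥(C 0)ᶜ := (hcompl ▸ hC.1.2.1 1).to_subtype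
    exact exists_iso_completeBipartiteGraph_fin e
  · rintro ⟨a, b, ha, hb, ⟨e⟩⟩
    have : Nonempty (Fin a) := Fin.pos_iff_nonempty.1 ha
    have : Nonempty (Fin b) := Fin.pos_iff_nonempty.1 hb
    rw [domChromNum_congr e, domChromNum_completeBipartiteGraph]
end

section
/- Let k be a positive integer, let G be a connected D(k) graph, and let C = (V_1, …, V_k) be any dominator coloring of G with exactly k color classes. Then every vertex of G dominates exactly one of the color classes V_1, …, V_k. -/
open SimpleGraph

/-- If `G` is a connected `D(k)` graph and `C` is any dominator
coloring of `G` with exactly `k` color classes, then every vertex dominates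
exactly one color class. -/
theorem stmt_2 {V : Type*} [Fintype V] (G : SimpleGraph V) {k : ℕ} (hk : 0 < k)
    (hconn : G.Connected) (hDk : IsDk G k)
    (C : Fin k → Set V) (hC : IsDominatorColoring G C) :
    ∀ v : V, ∃! i : Fin k, DominatesClass G v (C i) := by
  obtain ⟨⟨hpart, hne, hind⟩, hdom⟩ := hC
  intro v
  obtain ⟨i, hi⟩ := hdom v
  refine ⟨i, hi, fun j hj => ?_⟩
  by_contra hji
  have hvij : (i : ℕ) ≠ (j : ℕ) := fun h => hji (Fin.ext h.symm)
  have hk2 : 2 ≤ k := by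
    have h1 := i.isLt; have h2 := j.isLt; omega
  have hlow : domNum G ≤ k - 1 := by
    by_cases hall : ∀ l : Fin k, ∃ z : V, DominatesClass G z (C l)
    · -- every class is dominated: use v for classes i and j, a dominator z l otherwise
      choose z hz using hall
      classical
      set F : Finset V := insert v (((Finset.univ.erase i).erase j).image z) with hF
      have hvF : v ∈ (↑F : Set V) := by simp [hF]
      have hdomset : IsDomSet G (↑F : Set V) := by
        intro u hu
        obtain ⟨l, hul, -⟩ := hpart u
        by_cases hli : l = i
        · refine ⟨v, hvF, ?_⟩
          rcases hi u (hli ▸ hul) with h | h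
          · exact absurd (h ▸ hvF) hu
          · exact h
        · by_cases hlj : l = j
          · refine ⟨v, hvF, ?_⟩
            rcases hj u (hlj ▸ hul) with h | h
            · exact absurd (h ▸ hvF) hu
            · exact h
          · have hzF : z l ∈ (↑F : Set V) := by
              simp only [hF, Finset.coe_insert, Set.mem_insert_iff, Finset.coe_image,
                Set.mem_image, Finset.mem_coe, Finset.mem_erase, Finset.mem_univ]
              exact Or.inr ⟨l, ⟨hlj, hli, trivial⟩, rfl⟩
            refine ⟨z l, hzF, ?_⟩
            rcases hz l u hul with h | h
            · exact absurd (h ▸ hzF) hu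
            · exact h
      have hcard : F.card ≤ k - 1 := by
        have h1 : F.card ≤ (((Finset.univ.erase i).erase j).image z).card + 1 :=
          Finset.card_insert_le _ _
        have h2 : (((Finset.univ.erase i).erase j).image z).card ≤
            ((Finset.univ.erase i).erase j).card := Finset.card_image_le
        have hjmem : j ∈ (Finset.univ : Finset (Fin k)).erase i :=
          Finset.mem_erase.mpr ⟨hji, Finset.mem_univ j⟩
        have h3 : ((Finset.univ.erase i).erase j).card =
            (Finset.univ : Finset (Fin k)).card - 1 - 1 := by
          rw [Finset.card_erase_of_mem hjmem, Finset.card_erase_of_mem (Finset.mem_univ i)]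
        have h4 : (Finset.univ : Finset (Fin k)).card = k := by simp
        omega
      have : domNum G ≤ (↑F : Set V).ncard := Nat.sInf_le ⟨↑F, hdomset, rfl⟩
      rw [Set.ncard_coe_finset] at this
      omega
    · -- some class d is dominated by nobody: one representative per other class
      push_neg at hall
      obtain ⟨d, hd⟩ := hall
      choose x hx using hne
      classical
      set F : Finset V := (Finset.univ.erase d).image x with hF
      have hdomset : IsDomSet G (↑F : Set V) := by
        intro u hu
        obtain ⟨l', hl'⟩ := hdom u
        have hl'd : l' ≠ d := fun h => hd u (h ▸ hl')
        by_cases hucl : u ∈ C l'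
        · -- independence forces C l' = {u}, so the representative is u itself
          exfalso
          have hxl : x l' = u := by
            rcases hl' (x l') (hx l') with h | h
            · exact h
            · exact absurd h (hind l' u hucl (x l') (hx l'))
          exact hu (by
            simp only [hF, Finset.coe_image, Set.mem_image, Finset.mem_coe,
              Finset.mem_erase, Finset.mem_univ]
            exact ⟨l', ⟨hl'd, trivial⟩, hxl⟩)
        · have hxu : x l' ≠ u := fun h => hucl (h ▸ hx l')
          have hadj : G.Adj u (x l') := by
            rcases hl' (x l') (hx l') with h | h
            · exact absurd h hxu
            · exact h
          refine ⟨x l', ?_, hadj.symm⟩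
          simp only [hF, Finset.coe_image, Set.mem_image, Finset.mem_coe,
            Finset.mem_erase, Finset.mem_univ]
          exact ⟨l', ⟨hl'd, trivial⟩, rfl⟩
      have hcard : F.card ≤ k - 1 := by
        have h2 : F.card ≤ (Finset.univ.erase d).card := Finset.card_image_le
        have h3 : ((Finset.univ : Finset (Fin k)).erase d).card =
            (Finset.univ : Finset (Fin k)).card - 1 :=
          Finset.card_erase_of_mem (Finset.mem_univ d)
        have h4 : (Finset.univ : Finset (Fin k)).card = k := by simp
        omega
      have : domNum G ≤ (↑F : Set V).ncard := Nat.sInf_le ⟨↑F, hdomset, rfl⟩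
      rw [Set.ncard_coe_finset] at this
      omega
  rw [hDk.1] at hlow
  omega
end

section
/- For every even integer k ≥ 4 and every natural number n ≥ 3k, there exists a finite simple connected graph G on exactly n vertices with γ(G) = χ(G) = χ_d(G) = k, i.e., a D(k) graph of order n. -/
open SimpleGraph
/-!
The vertices `0, …, n - 1` are split into `k` independent classes: vertex `v < 3k` gets color
`v % k`, every later vertex color `0`. The colors are grouped into the `k / 2` pairs
`{2r, 2r + 1}`, the two classes of a pair are joined completely, and the vertices `0, …, k - 1`
(one of each color) additionally form a clique. The clique gives `χ ≥ k` and `χ_d ≥ k`, and it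
is a dominating set, so `γ ≤ k`; the coloring by classes is a dominator coloring, since each
vertex dominates the partner class of its own. Conversely, the vertices `c + k`, `c + 2k` of
color `c` see only the partner class of `c`, which forces every dominating set to meet each pair
of classes twice, so `γ ≥ k`.
-/

open SimpleGraph Finset

section General

variable {V : Type*} {G : SimpleGraph V}

theorem IsTotalDomSet.isDomSet {D : Set V} (h : IsTotalDomSet G D) : IsDomSet G D :=
  fun v _ => h v

theorem IsTotalDomSet.connected_of_isClique [Nonempty V] {s : Set V} (ht : IsTotalDomSet G s)
    (hs : G.IsClique s) : G.Connected := by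
  have hreach : ∀ a ∈ s, ∀ b ∈ s, G.Reachable a b := fun a ha b hb => by
    by_cases hab : a = b
    · exact hab ▸ Reachable.refl a
    · exact (hs ha hb hab).reachable
  refine ⟨fun v w => ?_⟩
  obtain ⟨a, ha, hav⟩ := ht v
  obtain ⟨b, hb, hbw⟩ := ht w
  exact hav.reachable.symm.trans ((hreach a ha b hb).trans hbw.reachable)

theorem IsProperColoring.card_le_of_isClique {k : ℕ} {C : Fin k → Set V}
    (hC : IsProperColoring G C) {s : Finset V} (hs : G.IsClique (s : Set V)) : s.card ≤ k := by
  choose f hf using fun v => (hC.1 v).exists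
  have hinj : Set.InjOn f s := fun a ha b hb hab => by
    by_contra hne
    exact hC.2.2 (f a) a (hf a) b (hab ▸ hf b) (hs ha hb hne)
  simpa using card_le_card_of_injOn f (fun v _ => mem_univ (f v)) hinj

theorem SimpleGraph.Coloring.isProperColoring {k : ℕ} (c : G.Coloring (Fin k))
    (hc : Function.Surjective c) : IsProperColoring G (fun i => {v | c v = i}) :=
  ⟨fun v => ⟨c v, rfl, fun _ hi => hi.symm⟩, fun i => hc i,
    fun _ _ hu _ hw hadj => c.valid hadj (hu.trans hw.symm)⟩

end General

namespace DkGraph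

def color (k v : ℕ) : ℕ := if v < 3 * k then v % k else 0

def partner (j : ℕ) : ℕ := 2 * (j / 2) + (1 - j % 2)

variable {k n : ℕ}

theorem color_lt (hk : 0 < k) (v : ℕ) : color k v < k := by
  unfold color
  split
  · exact Nat.mod_lt _ hk
  · exact hk

theorem color_add_mul {j m : ℕ} (hj : j < k) (hm : m < 3) : color k (j + m * k) = j := by
  have : m * k ≤ 2 * k := Nat.mul_le_mul_right k (by omega)
  rw [color, if_pos (by omega), Nat.add_mul_mod_self_right, Nat.mod_eq_of_lt hj]

theorem color_of_lt {v : ℕ} (hv : v < k) : color k v = v := by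
  simpa using color_add_mul (m := 0) hv (by omega)

theorem partner_lt {j : ℕ} (hke : Even k) (hj : j < k) : partner j < k := by
  rw [partner]
  have := Nat.even_iff.mp hke
  omega

def graph (k n : ℕ) : SimpleGraph (Fin n) where
  Adj u v := u ≠ v ∧
    ((color k u / 2 = color k v / 2 ∧ color k u ≠ color k v) ∨ (u.val < k ∧ v.val < k))
  symm := ⟨fun _ _ h => ⟨h.1.symm, by omega⟩⟩
  loopless := ⟨fun _ h => h.1 rfl⟩

theorem adj_of_color {u v : Fin n} (h : color k u / 2 = color k v / 2)
    (hne : color k u ≠ color k v) : (graph k n).Adj u v :=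
  ⟨fun e => hne (e ▸ rfl), Or.inl ⟨h, hne⟩⟩

theorem adj_of_color_eq_partner {u v : Fin n} (h : color k u = partner (color k v)) :
    (graph k n).Adj u v :=
  adj_of_color (by rw [h, partner]; omega) (by rw [h, partner]; omega)

theorem color_ne_of_adj {u v : Fin n} (h : (graph k n).Adj u v) : color k u ≠ color k v := by
  obtain ⟨hne, h | ⟨hu, hv⟩⟩ := h
  · exact h.2
  · rw [color_of_lt hu, color_of_lt hv]
    exact fun e => hne (Fin.ext e)

def coloring (hk : 0 < k) : (graph k n).Coloring (Fin k) :=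
  Coloring.mk (fun v => ⟨color k v, color_lt hk v⟩)
    fun h e => color_ne_of_adj h (congrArg Fin.val e)

theorem coloring_surjective (hk : 0 < k) (hkn : k ≤ n) :
    Function.Surjective (coloring (n := n) hk) :=
  fun j => ⟨⟨j, by omega⟩, Fin.ext (color_of_lt j.2)⟩

def clique (k n : ℕ) : Finset (Fin n) := {v | v.val < k}

theorem card_clique (hkn : k ≤ n) : (clique k n).card = k := by
  rw [clique, Fin.card_filter_val_lt, min_eq_right hkn]

theorem isClique_clique : (graph k n).IsClique (clique k n : Set (Fin n)) := by
  intro u hu v hv huv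
  simp only [clique, coe_filter, mem_univ, true_and, Set.mem_ofPred_eq] at hu hv
  exact ⟨huv, Or.inr ⟨hu, hv⟩⟩

theorem isTotalDomSet_clique (hk : 0 < k) (hke : Even k) (hkn : k ≤ n) :
    IsTotalDomSet (graph k n) (clique k n : Set (Fin n)) := by
  intro v
  have hp : partner (color k v) < k := partner_lt hke (color_lt hk v)
  refine ⟨⟨partner (color k v), by omega⟩, by simpa [clique] using hp, ?_⟩
  exact adj_of_color_eq_partner (color_of_lt hp)

theorem connected (hk : 0 < k) (hke : Even k) (hkn : k ≤ n) : (graph k n).Connected :=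
  haveI : Nonempty (Fin n) := ⟨⟨0, by omega⟩⟩
  (isTotalDomSet_clique hk hke hkn).connected_of_isClique isClique_clique

theorem chromaticNumber_eq (hk : 0 < k) (hkn : k ≤ n) : (graph k n).chromaticNumber = k := by
  refine le_antisymm (Colorable.chromaticNumber_le ⟨coloring hk⟩) ?_
  simpa [card_clique hkn] using (isClique_clique (k := k) (n := n)).card_le_chromaticNumber

theorem domChromNum_eq (hk : 0 < k) (hke : Even k) (hkn : k ≤ n) :
    domChromNum (graph k n) = k := by
  refine IsLeast.csInf_eq ⟨⟨_, (coloring hk).isProperColoring (coloring_surjective hk hkn),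
    fun v => ⟨⟨partner (color k v), partner_lt hke (color_lt hk v)⟩, ?_⟩⟩, ?_⟩
  · exact fun u hu => Or.inr (adj_of_color_eq_partner (congrArg Fin.val hu)).symm
  · rintro k' ⟨C, hC, -⟩
    simpa [card_clique hkn] using hC.card_le_of_isClique isClique_clique

theorem exists_mem_same_pair_of_isDomSet {D : Set (Fin n)} (hD : IsDomSet (graph k n) D)
    {t : Fin n} (ht : k ≤ t.val) :
    ∃ d ∈ D, color k d / 2 = color k t / 2 ∧ (d = t ∨ color k d ≠ color k t) := by
  by_cases htD : t ∈ D
  · exact ⟨t, htD, rfl, Or.inl rfl⟩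
  · obtain ⟨d, hdD, -, h | h⟩ := hD t htD
    · exact ⟨d, hdD, h.1, Or.inr h.2⟩
    · omega

theorem two_le_card_filter_of_isDomSet (hn : 3 * k ≤ n) {D : Finset (Fin n)}
    (hD : IsDomSet (graph k n) (D : Set (Fin n))) {r : ℕ} (hr : 2 * r + 1 < k) :
    2 ≤ (D.filter fun v : Fin n => color k v / 2 = r).card := by
  set P := D.filter fun v : Fin n => color k v / 2 = r
  by_contra! hP
  have hP : ∀ a ∈ P, ∀ b ∈ P, a = b := card_le_one.mp (by omega)
  -- The vertices `c + k` and `c + 2k` of color `c` are distinct, so they cannot both be the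
  -- single element of `P`.
  have exists_other_color : ∀ c < k, c / 2 = r → ∃ p ∈ P, color k p ≠ c := by
    intro c hc hcr
    have hcolor : ∀ m < 3, color k (c + m * k) = c := fun m hm => color_add_mul hc hm
    obtain ⟨p₁, hp₁D, hp₁r, hp₁⟩ :=
      exists_mem_same_pair_of_isDomSet hD (t := ⟨c + 1 * k, by omega⟩) (by dsimp only; omega)
    obtain ⟨p₂, hp₂D, hp₂r, hp₂⟩ :=
      exists_mem_same_pair_of_isDomSet hD (t := ⟨c + 2 * k, by omega⟩) (by dsimp only; omega)
    simp only [hcolor 1 (by omega), hcolor 2 (by omega), hcr] at hp₁r hp₂r hp₁ hp₂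
    have hp₁P : p₁ ∈ P := mem_filter.mpr ⟨hp₁D, hp₁r⟩
    have hp₂P : p₂ ∈ P := mem_filter.mpr ⟨hp₂D, hp₂r⟩
    have h₁₂ := hP p₁ hp₁P p₂ hp₂P
    rcases hp₁ with rfl | hp₁
    · rcases hp₂ with hp₂ | hp₂
      · exact absurd (Fin.mk.inj (h₁₂.trans hp₂)) (by omega)
      · exact ⟨_, hp₂P, hp₂⟩
    · exact ⟨p₁, hp₁P, hp₁⟩
  obtain ⟨p, hpP, hp⟩ := exists_other_color (2 * r) (by omega) (by omega)
  obtain ⟨q, hqP, hq⟩ := exists_other_color (2 * r + 1) hr (by omega)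
  have hpr := (mem_filter.mp hpP).2
  rw [hP p hpP q hqP] at hp hpr
  omega

theorem le_card_of_isDomSet (hk : 0 < k) (hke : Even k) (hn : 3 * k ≤ n) {D : Finset (Fin n)}
    (hD : IsDomSet (graph k n) (D : Set (Fin n))) : k ≤ D.card := by
  have hk2 := Nat.even_iff.mp hke
  have hmaps : ∀ v ∈ D, color k v / 2 ∈ range (k / 2) := fun v _ => by
    have := color_lt hk v
    rw [mem_range]
    omega
  calc k = ∑ _r ∈ range (k / 2), 2 := by simp only [sum_const, card_range, smul_eq_mul]; omega
    _ ≤ ∑ r ∈ range (k / 2), (D.filter fun v : Fin n => color k v / 2 = r).card :=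
        sum_le_sum fun r hr => two_le_card_filter_of_isDomSet hn hD (by rw [mem_range] at hr; omega)
    _ = D.card := (card_eq_sum_card_fiberwise hmaps).symm

theorem domNum_eq (hk : 0 < k) (hke : Even k) (hn : 3 * k ≤ n) : domNum (graph k n) = k := by
  refine IsLeast.csInf_eq ⟨⟨_, (isTotalDomSet_clique hk hke (by omega)).isDomSet,
    by rw [Set.ncard_coe_finset, card_clique (by omega)]⟩, ?_⟩
  rintro _ ⟨D, hD, rfl⟩
  classical
  rw [Set.ncard_eq_toFinset_card']
  exact le_card_of_isDomSet hk hke hn (by simpa using hD)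

end DkGraph

/-- For every even integer `k ≥ 4` and every natural number
`n ≥ 3k`, there exists a connected `D(k)` graph of order `n`. -/
theorem stmt_7 (k n : ℕ) (hk : 4 ≤ k) (hke : Even k) (hn : 3 * k ≤ n) :
    ∃ G : SimpleGraph (Fin n), G.Connected ∧ IsDk G k := by
  have hk0 : 0 < k := by omega
  have hkn : k ≤ n := by omega
  exact ⟨DkGraph.graph k n, DkGraph.connected hk0 hke hkn, DkGraph.domNum_eq hk0 hke hn,
    DkGraph.chromaticNumber_eq hk0 hkn, DkGraph.domChromNum_eq hk0 hke hkn⟩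
end

section
/- Let G be a connected D(3) graph and let C = (V_1, V_2, V_3) be any dominator coloring of G with exactly 3 color classes. Then exactly one of the three color classes is a singleton. -/
open SimpleGraph

/-- If two vertices cover all other vertices, the domination number is at most 2. -/
lemma two_dom_le {V : Type*} [Fintype V] (G : SimpleGraph V) (x y : V)
    (h : ∀ v, v ≠ x → v ≠ y → ∃ u, (u = x ∨ u = y) ∧ G.Adj u v) :
    domNum G ≤ 2 := by
  have hD : IsDomSet G {x, y} := by
    intro v hv
    simp only [Set.mem_insert_iff, Set.mem_singleton_iff, not_or] at hv
    obtain ⟨u, hu, hadj⟩ := h v hv.1 hv.2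
    exact ⟨u, by simpa using hu, hadj⟩
  have h2 : ({x, y} : Set V).ncard ≤ 2 := by
    have := Set.ncard_insert_le x ({y} : Set V)
    simpa using this
  exact le_trans (Nat.sInf_le ⟨{x, y}, hD, rfl⟩) h2

/-- If `G` is a connected `D(3)` graph and `C = (V_1, V_2, V_3)`
is any dominator coloring of `G` with exactly 3 color classes, then exactly one
of the three color classes is a singleton. -/
theorem stmt_10 {V : Type*} [Fintype V] (G : SimpleGraph V)
    (hconn : G.Connected) (hDk : IsDk G 3)
    (C : Fin 3 → Set V) (hC : IsDominatorColoring G C) :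
    ∃! i : Fin 3, ∃ a : V, C i = {a} := by
  obtain ⟨⟨huniq, hnonempty, hind⟩, hdomcol⟩ := hC
  have hγ : domNum G = 3 := hDk.1
  -- if a vertex dominates its own class, that class is a singleton
  have hsing : ∀ v : V, ∀ m : Fin 3, v ∈ C m → DominatesClass G v (C m) → C m = {v} := by
    intro v m hv hdom
    ext w
    simp only [Set.mem_singleton_iff]
    constructor
    · intro hw
      rcases hdom w hw with h' | h'
      · exact h'
      · exact absurd h' (hind m v hv w hw)
    · rintro rfl; exact hv
  -- existence of a singleton class
  have hex : ∃ i : Fin 3, ∃ a : V, C i = {a} := by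
    by_contra hno
    push_neg at hno
    -- every vertex is adjacent to all of some class
    have hT : ∀ v : V, ∃ m : Fin 3, ∀ u ∈ C m, G.Adj v u := by
      intro v
      obtain ⟨m, hm⟩ := hdomcol v
      refine ⟨m, fun u hu => ?_⟩
      rcases hm u hu with h | h
      · exfalso
        subst h
        exact hno m u (hsing u m hu hm)
      · exact h
    -- if v is adjacent to all of C m then v ∉ C m
    have hTnot : ∀ v : V, ∀ m : Fin 3, (∀ u ∈ C m, G.Adj v u) → v ∉ C m := by
      intro v m hTv hv
      exact G.irrefl (hTv v hv)
    obtain ⟨v0, hv0⟩ := hnonempty 0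
    obtain ⟨j, hj⟩ := hT v0
    have hj0 : j ≠ 0 := fun h => hTnot v0 j hj (h ▸ hv0)
    obtain ⟨k, hk0, hkj, hall⟩ : ∃ k : Fin 3, k ≠ 0 ∧ k ≠ j ∧
        ∀ m : Fin 3, m = 0 ∨ m = j ∨ m = k := by
      have : ∀ j : Fin 3, j ≠ 0 → ∃ k : Fin 3, k ≠ 0 ∧ k ≠ j ∧
          ∀ m : Fin 3, m = 0 ∨ m = j ∨ m = k := by decide
      exact this j hj0
    have hvclass : ∀ v : V, v ∈ C 0 ∨ v ∈ C j ∨ v ∈ C k := by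
      intro v
      obtain ⟨m, hm, -⟩ := huniq v
      rcases hall m with rfl | rfl | rfl
      · exact Or.inl hm
      · exact Or.inr (Or.inl hm)
      · exact Or.inr (Or.inr hm)
    have h23 : ¬ (3 : ℕ) ≤ 2 := by norm_num
    by_cases hcase1 : ∃ b ∈ C j, ∀ u ∈ C 0, G.Adj b u
    · obtain ⟨b, hbj, hbT⟩ := hcase1
      refine h23 (hγ ▸ two_dom_le G v0 b (fun v _ _ => ?_))
      rcases hvclass v with hv | hv | hv
      · exact ⟨b, Or.inr rfl, hbT v hv⟩
      · exact ⟨v0, Or.inl rfl, hj v hv⟩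
      · obtain ⟨m, hm⟩ := hT v
        rcases hall m with rfl | rfl | rfl
        · exact ⟨v0, Or.inl rfl, (hm v0 hv0).symm⟩
        · exact ⟨b, Or.inr rfl, (hm b hbj).symm⟩
        · exact absurd hv (hTnot v _ hm)
    · push_neg at hcase1
      have hCj : ∀ b ∈ C j, ∀ u ∈ C k, G.Adj b u := by
        intro b hb
        obtain ⟨m, hm⟩ := hT b
        rcases hall m with rfl | rfl | rfl
        · exfalso
          obtain ⟨u, hu, hnadj⟩ := hcase1 b hb
          exact hnadj (hm u hu)
        · exact absurd hb (hTnot b m hm)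
        · exact hm
      by_cases hcase2 : ∃ c ∈ C k, ∀ u ∈ C j, G.Adj c u
      · obtain ⟨c, hck, hcT⟩ := hcase2
        obtain ⟨b, hbj⟩ := hnonempty j
        refine h23 (hγ ▸ two_dom_le G b c (fun v _ _ => ?_))
        rcases hvclass v with hv | hv | hv
        · obtain ⟨m, hm⟩ := hT v
          rcases hall m with rfl | rfl | rfl
          · exact absurd hv (hTnot v _ hm)
          · exact ⟨b, Or.inl rfl, (hm b hbj).symm⟩
          · exact ⟨c, Or.inr rfl, (hm c hck).symm⟩
        · exact ⟨c, Or.inr rfl, hcT v hv⟩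
        · exact ⟨b, Or.inl rfl, hCj b hbj v hv⟩
      · push_neg at hcase2
        have hCk : ∀ c ∈ C k, ∀ u ∈ C 0, G.Adj c u := by
          intro c hc
          obtain ⟨m, hm⟩ := hT c
          rcases hall m with rfl | rfl | rfl
          · exact hm
          · exfalso
            obtain ⟨u, hu, hnadj⟩ := hcase2 c hc
            exact hnadj (hm u hu)
          · exact absurd hc (hTnot c m hm)
        obtain ⟨c, hck⟩ := hnonempty k
        refine h23 (hγ ▸ two_dom_le G v0 c (fun v _ _ => ?_))
        rcases hvclass v with hv | hv | hv
        · exact ⟨c, Or.inr rfl, hCk c hck v hv⟩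
        · exact ⟨v0, Or.inl rfl, hj v hv⟩
        · exact ⟨v0, Or.inl rfl, (hCk v hv v0 hv0).symm⟩
  -- uniqueness
  obtain ⟨i, a, hia⟩ := hex
  refine ⟨i, ⟨a, hia⟩, ?_⟩
  rintro j ⟨b, hjb⟩
  by_contra hji
  exfalso
  have ha : a ∈ C i := hia ▸ rfl
  have hb : b ∈ C j := hjb ▸ rfl
  obtain ⟨k, hki, hkj, hall⟩ : ∃ k : Fin 3, k ≠ i ∧ k ≠ j ∧
      ∀ m : Fin 3, m = i ∨ m = j ∨ m = k := by
    have : ∀ i j : Fin 3, j ≠ i → ∃ k : Fin 3, k ≠ i ∧ k ≠ j ∧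
        ∀ m : Fin 3, m = i ∨ m = j ∨ m = k := by decide
    exact this i j hji
  have h23 : ¬ (3 : ℕ) ≤ 2 := by norm_num
  refine h23 (hγ ▸ two_dom_le G a b (fun v hva hvb => ?_))
  -- v is in C k
  have hvk : v ∈ C k := by
    obtain ⟨m, hm, -⟩ := huniq v
    rcases hall m with rfl | rfl | rfl
    · rw [hia] at hm; exact absurd hm hva
    · rw [hjb] at hm; exact absurd hm hvb
    · exact hm
  obtain ⟨m, hm⟩ := hdomcol v
  rcases hall m with rfl | rfl | rfl
  · rcases hm a ha with h | h
    · exact absurd h.symm hva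
    · exact ⟨a, Or.inl rfl, h.symm⟩
  · rcases hm b hb with h | h
    · exact absurd h.symm hvb
    · exact ⟨b, Or.inr rfl, h.symm⟩
  · -- C k = {v}, use connectivity
    have hCkv : C m = {v} := hsing v m hvk hm
    obtain ⟨p⟩ := hconn.preconnected v a
    have hnil : ¬ p.Nil := SimpleGraph.Walk.not_nil_of_ne hva
    obtain ⟨u, hadj⟩ : ∃ u, G.Adj v u := ⟨p.getVert 1, p.adj_snd hnil⟩
    have huv : u ≠ v := fun h => G.irrefl (h ▸ hadj)
    have : u = a ∨ u = b := by
      obtain ⟨m', hm', -⟩ := huniq u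
      rcases hall m' with rfl | rfl | rfl
      · rw [hia] at hm'; exact Or.inl hm'
      · rw [hjb] at hm'; exact Or.inr hm'
      · rw [hCkv] at hm'; exact absurd hm' huv
    rcases this with rfl | rfl
    · exact ⟨u, Or.inl rfl, hadj.symm⟩
    · exact ⟨u, Or.inr rfl, hadj.symm⟩
end

section
/- Let G be a connected D(3) graph and let C = (V_1, V_2, V_3) be a dominator coloring of G with exactly 3 color classes such that |V_3| = 1. Then |V_1| ≥ 3 and |V_2| ≥ 3; in particular G has at least 7 vertices. -/
open SimpleGraph

section Aux
variable {V : Type*} [Fintype V] {G : SimpleGraph V}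

lemma domNum_le_of_domset {D : Set V} (hD : IsDomSet G D) : domNum G ≤ D.ncard :=
  Nat.sInf_le ⟨D, hD, rfl⟩


omit [Fintype V] in
lemma exists_adj_of_connected (hconn : G.Connected) {a b : V} (hab : a ≠ b) :
    ∃ u, G.Adj u b := by
  obtain ⟨w⟩ := hconn.preconnected b a
  cases w with
  | nil => exact absurd rfl hab.symm
  | cons h p => exact ⟨_, h.symm⟩


omit [Fintype V] in
lemma swap_coloring {C : Fin 3 → Set V} (hC : IsDominatorColoring G C) :
    IsDominatorColoring G (C ∘ Equiv.swap 0 1) := by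
  obtain ⟨⟨huniq, hne, hind⟩, hdom⟩ := hC
  refine ⟨⟨?_, fun i => hne _, fun i => hind _⟩, fun v => ?_⟩
  · intro v
    obtain ⟨i, hi, hu⟩ := huniq v
    refine ⟨Equiv.swap 0 1 i, ?_, fun j hj => ?_⟩
    · show v ∈ C (Equiv.swap 0 1 (Equiv.swap 0 1 i))
      rwa [Equiv.swap_apply_self]
    · rw [← hu _ hj, Equiv.swap_apply_self]
  · obtain ⟨i, hi⟩ := hdom v
    refine ⟨Equiv.swap 0 1 i, ?_⟩
    show DominatesClass G v (C (Equiv.swap 0 1 (Equiv.swap 0 1 i)))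
    rwa [Equiv.swap_apply_self]


lemma two_le_class0 (hconn : G.Connected) (hdom3 : domNum G = 3)
    {C : Fin 3 → Set V} (hC : IsDominatorColoring G C)
    {x : V} (hx : C 2 = {x}) : 2 ≤ (C 0).ncard := by
  obtain ⟨⟨huniq, hne, hind⟩, hdom⟩ := hC
  by_contra h
  push_neg at h
  have h1 : (C 0).ncard = 1 := by
    have := (hne 0).ncard_pos (C 0).toFinite
    omega
  obtain ⟨a, ha⟩ := Set.ncard_eq_one.mp h1
  have classuniq : ∀ v (i j : Fin 3), v ∈ C i → v ∈ C j → i = j := by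
    intro v i j hi hj
    obtain ⟨k, -, hu⟩ := huniq v
    rw [hu i hi, hu j hj]
  have memclass : ∀ v : V, v ∈ C 0 ∨ v ∈ C 1 ∨ v ∈ C 2 := by
    intro v
    obtain ⟨i, hi, -⟩ := huniq v
    fin_cases i <;> tauto
  have hax : a ≠ x := by
    intro h'
    have : (0 : Fin 3) = 2 := classuniq a 0 2 (ha ▸ rfl) (by rw [h', hx]; rfl)
    exact absurd this (by decide)
  have hmema : a ∈ C 0 := ha ▸ rfl
  have hmemx : x ∈ C 2 := hx ▸ rfl
  have hD : IsDomSet G {a, x} := by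
    intro v hv
    have hva : v ≠ a := fun h' => hv (by simp [h'])
    have hvx : v ≠ x := fun h' => hv (by simp [h'])
    rcases Nat.lt_or_ge (C 1).ncard 2 with hc1 | hc1
    · -- C 1 is a singleton; use coverage and connectivity
      have hc1' : (C 1).ncard = 1 := by
        have := (hne 1).ncard_pos (C 1).toFinite
        omega
      obtain ⟨b, hb⟩ := Set.ncard_eq_one.mp hc1'
      have hvb : v = b := by
        rcases memclass v with h' | h' | h'
        · exact absurd (by rwa [ha] at h') hva
        · rwa [hb] at h'
        · exact absurd (by rwa [hx] at h') hvx
      subst hvb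
      obtain ⟨u, hu⟩ := exists_adj_of_connected hconn hva.symm
      rcases memclass u with h' | h' | h'
      · exact ⟨a, by simp, by rwa [ha] at h' ▸ (by rwa [ha] at h' : u = a) ▸ hu⟩
      · rw [hb] at h'
        exact absurd (h' ▸ hu) (G.irrefl)
      · exact ⟨x, by simp, (by rwa [hx] at h' : u = x) ▸ hu⟩
    · -- C 1 has at least two elements; use the dominator property
      obtain ⟨i, hi⟩ := hdom v
      fin_cases i
      · have := hi a hmema
        rcases this with h' | h'
        · exact absurd h'.symm hva
        · exact ⟨a, by simp, h'.symm⟩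
      · -- v dominates C 1
        have hv1 : v ∉ C 1 := by
          intro hv1
          obtain ⟨u, hu1, huv⟩ := Set.exists_ne_of_one_lt_ncard hc1 v
          rcases hi u hu1 with h' | h'
          · exact huv h'
          · exact hind 1 v hv1 u hu1 h'
        rcases memclass v with h' | h' | h'
        · exact absurd (by rwa [ha] at h') hva
        · exact absurd h' hv1
        · exact absurd (by rwa [hx] at h') hvx
      · have := hi x hmemx
        rcases this with h' | h'
        · exact absurd h'.symm hvx
        · exact ⟨x, by simp, h'.symm⟩
  have hle := domNum_le_of_domset hD
  rw [Set.ncard_pair hax] at hle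
  omega

lemma three_le_class0 (hconn : G.Connected) (hdom3 : domNum G = 3)
    {C : Fin 3 → Set V} (hC : IsDominatorColoring G C)
    {x : V} (hx : C 2 = {x}) (hc1 : 2 ≤ (C 1).ncard) (hc0 : 2 ≤ (C 0).ncard) :
    3 ≤ (C 0).ncard := by
  obtain ⟨⟨huniq, hne, hind⟩, hdom⟩ := hC
  by_contra h
  push_neg at h
  have h2 : (C 0).ncard = 2 := by omega
  obtain ⟨a, b, hab, hC0⟩ := Set.ncard_eq_two.mp h2
  have classuniq : ∀ v (i j : Fin 3), v ∈ C i → v ∈ C j → i = j := by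
    intro v i j hi hj
    obtain ⟨k, -, hu⟩ := huniq v
    rw [hu i hi, hu j hj]
  have memclass : ∀ v : V, v ∈ C 0 ∨ v ∈ C 1 ∨ v ∈ C 2 := by
    intro v
    obtain ⟨i, hi, -⟩ := huniq v
    fin_cases i <;> tauto
  have hmema : a ∈ C 0 := by rw [hC0]; simp
  have hmemb : b ∈ C 0 := by rw [hC0]; simp
  have hmemx : x ∈ C 2 := hx ▸ rfl
  have hax : a ≠ x := fun h' =>
    absurd (classuniq a 0 2 hmema (h' ▸ hmemx)) (by decide)
  have hbx : b ≠ x := fun h' =>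
    absurd (classuniq b 0 2 hmemb (h' ▸ hmemx)) (by decide)
  have hnadj : ¬ G.Adj a b := hind 0 a hmema b hmemb
  -- vertices dominating class 0 are adjacent to both a and b
  have fact0 : ∀ v, DominatesClass G v (C 0) → G.Adj v a ∧ G.Adj v b := by
    intro v hv
    rcases hv a hmema with h' | h'
    · subst h'
      rcases hv b hmemb with h'' | h''
      · exact absurd h''.symm hab
      · exact absurd h'' hnadj
    · rcases hv b hmemb with h'' | h''
      · subst h''
        exact absurd h'.symm hnadj
      · exact ⟨h', h''⟩
  -- vertices dominating class 1 are outside C 1 and adjacent to all of C 1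
  have fact1 : ∀ v, DominatesClass G v (C 1) → v ∉ C 1 ∧ ∀ u ∈ C 1, G.Adj v u := by
    intro v hv
    have hv1 : v ∉ C 1 := by
      intro hv1
      obtain ⟨u, hu1, huv⟩ := Set.exists_ne_of_one_lt_ncard hc1 v
      rcases hv u hu1 with h' | h'
      · exact huv h'
      · exact hind 1 v hv1 u hu1 h'
    refine ⟨hv1, fun u hu => ?_⟩
    rcases hv u hu with h' | h'
    · exact absurd (h' ▸ hu) hv1
    · exact h'
  have fact2 : ∀ v, DominatesClass G v (C 2) → v = x ∨ G.Adj v x := by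
    intro v hv
    rcases hv x hmemx with h' | h'
    · exact Or.inl h'.symm
    · exact Or.inr h'
  -- main case analysis
  have key : ∃ D : Set V, IsDomSet G D ∧ D.ncard = 2 := by
    by_cases hxb : G.Adj x b
    · refine ⟨{a, x}, ?_, Set.ncard_pair hax⟩
      intro v hv
      have hva : v ≠ a := fun h' => hv (by simp [h'])
      have hvx : v ≠ x := fun h' => hv (by simp [h'])
      obtain ⟨i, hi⟩ := hdom v
      fin_cases i
      · exact ⟨a, by simp, (fact0 v hi).1.symm⟩
      · have := (fact1 v hi).1
        rcases memclass v with h' | h' | h'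
        · rw [hC0] at h'
          rcases h' with h' | h'
          · exact absurd h' hva
          · exact ⟨x, by simp, h' ▸ hxb⟩
        · exact absurd h' this
        · exact absurd (by rwa [hx] at h') hvx
      · rcases fact2 v hi with h' | h'
        · exact absurd h' hvx
        · exact ⟨x, by simp, h'.symm⟩
    · by_cases hxa : G.Adj x a
      · refine ⟨{b, x}, ?_, Set.ncard_pair hbx⟩
        intro v hv
        have hvb : v ≠ b := fun h' => hv (by simp [h'])
        have hvx : v ≠ x := fun h' => hv (by simp [h'])
        obtain ⟨i, hi⟩ := hdom v
        fin_cases i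
        · exact ⟨b, by simp, (fact0 v hi).2.symm⟩
        · have := (fact1 v hi).1
          rcases memclass v with h' | h' | h'
          · rw [hC0] at h'
            rcases h' with h' | h'
            · exact ⟨x, by simp, h' ▸ hxa⟩
            · exact absurd h' hvb
          · exact absurd h' this
          · exact absurd (by rwa [hx] at h') hvx
        · rcases fact2 v hi with h' | h'
          · exact absurd h' hvx
          · exact ⟨x, by simp, h'.symm⟩
      · -- a and b are adjacent to all of C 1
        have ha3 : ∀ u ∈ C 1, G.Adj a u := by
          obtain ⟨i, hi⟩ := hdom a
          fin_cases i
          · exact absurd (fact0 a hi).1 (G.irrefl)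
          · exact (fact1 a hi).2
          · rcases fact2 a hi with h' | h'
            · exact absurd h' hax
            · exact absurd h'.symm hxa
        have hb3 : ∀ u ∈ C 1, G.Adj b u := by
          obtain ⟨i, hi⟩ := hdom b
          fin_cases i
          · exact absurd (fact0 b hi).2 (G.irrefl)
          · exact (fact1 b hi).2
          · rcases fact2 b hi with h' | h'
            · exact absurd h' hbx
            · exact absurd h'.symm hxb
        -- x has a neighbor c, necessarily in C 1
        obtain ⟨c, hc⟩ := exists_adj_of_connected hconn hax
        have hc1' : c ∈ C 1 := by
          rcases memclass c with h' | h' | h'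
          · rw [hC0] at h'
            rcases h' with h' | h'
            · exact absurd (h' ▸ hc).symm hxa
            · exact absurd (h' ▸ hc).symm hxb
          · exact h'
          · rw [hx] at h'
            exact absurd (h' ▸ hc) (G.irrefl)
        have hac : a ≠ c := fun h' =>
          absurd (classuniq a 0 1 hmema (h' ▸ hc1')) (by decide)
        refine ⟨{a, c}, ?_, Set.ncard_pair hac⟩
        intro v hv
        have hva : v ≠ a := fun h' => hv (by simp [h'])
        have hvc : v ≠ c := fun h' => hv (by simp [h'])
        obtain ⟨i, hi⟩ := hdom v
        fin_cases i
        · exact ⟨a, by simp, (fact0 v hi).1.symm⟩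
        · have := (fact1 v hi).1
          rcases memclass v with h' | h' | h'
          · rw [hC0] at h'
            rcases h' with h' | h'
            · exact absurd h' hva
            · exact ⟨c, by simp, (h' ▸ hb3 c hc1' : G.Adj v c).symm⟩
          · exact absurd h' this
          · rw [hx] at h'
            exact ⟨c, by simp, h' ▸ hc⟩
        · rcases fact2 v hi with h' | h'
          · exact ⟨c, by simp, h' ▸ hc⟩
          · rcases memclass v with h'' | h'' | h''
            · rw [hC0] at h''
              rcases h'' with h'' | h''
              · exact absurd h'' hva
              · exact ⟨c, by simp, (h'' ▸ hb3 c hc1' : G.Adj v c).symm⟩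
            · exact ⟨a, by simp, ha3 v h''⟩
            · rw [hx] at h''
              exact absurd (h'' ▸ h') (G.irrefl)
  obtain ⟨D, hD, hDcard⟩ := key
  have hle := domNum_le_of_domset hD
  omega

end Aux

/-- If `G` is a connected `D(3)` graph and `C = (V_1, V_2, V_3)`
is a dominator coloring of `G` with exactly 3 color classes such that
`|V_3| = 1`, then `|V_1| ≥ 3` and `|V_2| ≥ 3`; in particular `G` has at least
7 vertices. -/
theorem stmt_11 {V : Type*} [Fintype V] (G : SimpleGraph V)
    (hconn : G.Connected) (hDk : IsDk G 3)
    (C : Fin 3 → Set V) (hC : IsDominatorColoring G C)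
    (h3 : (C 2).ncard = 1) :
    3 ≤ (C 0).ncard ∧ 3 ≤ (C 1).ncard ∧ 7 ≤ Fintype.card V := by
  obtain ⟨hdom3, -, -⟩ := hDk
  obtain ⟨x, hx⟩ := Set.ncard_eq_one.mp h3
  have hswap := swap_coloring hC
  have hs0 : (C ∘ Equiv.swap 0 1) 0 = C 1 := by simp
  have hs1 : (C ∘ Equiv.swap 0 1) 1 = C 0 := by simp
  have hx' : (C ∘ Equiv.swap 0 1) 2 = {x} := by
    show C (Equiv.swap 0 1 2) = {x}
    rw [Equiv.swap_apply_of_ne_of_ne (by decide) (by decide)]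
    exact hx
  have h20 : 2 ≤ (C 0).ncard := two_le_class0 hconn hdom3 hC hx
  have h21 : 2 ≤ (C 1).ncard := by
    have := two_le_class0 hconn hdom3 hswap hx'
    rwa [hs0] at this
  have h30 : 3 ≤ (C 0).ncard := three_le_class0 hconn hdom3 hC hx h21 h20
  have h31 : 3 ≤ (C 1).ncard := by
    have := three_le_class0 hconn hdom3 hswap hx' (by rwa [hs1]) (by rwa [hs0])
    rwa [hs0] at this
  obtain ⟨⟨huniq, hne, hind⟩, -⟩ := hC
  have classuniq : ∀ v (i j : Fin 3), v ∈ C i → v ∈ C j → i = j := by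
    intro v i j hi hj
    obtain ⟨k, -, hu⟩ := huniq v
    rw [hu i hi, hu j hj]
  have cover : (Set.univ : Set V) = C 0 ∪ C 1 ∪ C 2 := by
    ext v
    simp only [Set.mem_univ, Set.mem_union, true_iff]
    obtain ⟨i, hi, -⟩ := huniq v
    fin_cases i <;> tauto
  have hd01 : Disjoint (C 0) (C 1) := Set.disjoint_left.mpr fun v h0 h1 =>
    absurd (classuniq v 0 1 h0 h1) (by decide)
  have hd2 : Disjoint (C 0 ∪ C 1) (C 2) := by
    rw [Set.disjoint_union_left]
    exact ⟨Set.disjoint_left.mpr fun v h0 h2 => absurd (classuniq v 0 2 h0 h2) (by decide),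
      Set.disjoint_left.mpr fun v h1 h2 => absurd (classuniq v 1 2 h1 h2) (by decide)⟩
  have hcard : Fintype.card V = (C 0).ncard + (C 1).ncard + (C 2).ncard := by
    rw [← Nat.card_eq_fintype_card, ← Set.ncard_univ, cover,
      Set.ncard_union_eq hd2, Set.ncard_union_eq hd01]
  exact ⟨h30, h31, by omega⟩
end

section
/- Let G be a connected D(3) graph and let C = (V_1, V_2, V_3) be a dominator coloring of G with exactly 3 color classes such that V_3 = {x_3} is a singleton. Then there are at least two vertices of V_1 that are not adjacent to x_3, and at least two vertices of V_2 that are not adjacent to x_3. -/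
open SimpleGraph

section Aux

lemma key_lemma {V : Type*} [Fintype V] (G : SimpleGraph V) (hconn : G.Connected)
    (hγ : domNum G = 3) (S T : Set V) (x₃ : V)
    (hSne : S.Nonempty)
    (hSind : ∀ u ∈ S, ∀ w ∈ S, ¬ G.Adj u w)
    (hTind : ∀ u ∈ T, ∀ w ∈ T, ¬ G.Adj u w)
    (hST : ∀ v ∈ S, v ∉ T)
    (hxS : x₃ ∉ S) (hxT : x₃ ∉ T)
    (hcover : ∀ v, v ∈ S ∨ v ∈ T ∨ v = x₃)
    (hdomv : ∀ v, (∀ u ∈ S, u = v ∨ G.Adj v u) ∨ (∀ u ∈ T, u = v ∨ G.Adj v u) ∨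
      (x₃ = v ∨ G.Adj v x₃)) :
    ∃ u v, u ∈ S ∧ v ∈ S ∧ u ≠ v ∧ ¬ G.Adj x₃ u ∧ ¬ G.Adj x₃ v := by
  by_contra h
  push_neg at h
  -- h : ∀ u v, u ∈ S → v ∈ S → u ≠ v → ¬G.Adj x₃ u → G.Adj x₃ v
  have hsub : ∀ a ∈ S, ∀ b ∈ S, ¬ G.Adj x₃ a → ¬ G.Adj x₃ b → a = b := by
    intro a ha b hb hna hnb
    by_contra hne
    exact hnb (h a b ha hb hne hna)
  suffices hD : ∃ D : Set V, IsDomSet G D ∧ D.ncard ≤ 2 by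
    obtain ⟨D, hD, hcard⟩ := hD
    have hle : domNum G ≤ D.ncard := Nat.sInf_le ⟨D, hD, rfl⟩
    rw [hγ] at hle
    omega
  -- helper for two-element sets
  have card2 : ∀ a b : V, ({a, b} : Set V).ncard ≤ 2 := by
    intro a b
    calc ({a, b} : Set V).ncard ≤ ({b} : Set V).ncard + 1 := Set.ncard_insert_le a {b}
    _ = 2 := by rw [Set.ncard_singleton]
  -- main builder: D = {x₃, u}
  have main : ∀ u ∈ S, (∀ w ∈ S, w = u ∨ G.Adj x₃ w) →
      (∀ z ∈ T, G.Adj u z ∨ G.Adj x₃ z) →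
      ∃ D : Set V, IsDomSet G D ∧ D.ncard ≤ 2 := by
    intro u huS hu hT
    refine ⟨{x₃, u}, ?_, card2 x₃ u⟩
    intro v hv
    rcases hcover v with h1 | h2 | h3
    · rcases hu v h1 with rfl | ha
      · exact absurd (by simp) hv
      · exact ⟨x₃, by simp, ha⟩
    · rcases hT v h2 with ha | ha
      · exact ⟨u, by simp, ha⟩
      · exact ⟨x₃, by simp, ha⟩
    · exact absurd (by simp [h3]) hv
  by_cases hex : ∃ u ∈ S, ¬ G.Adj x₃ u
  · obtain ⟨u, huS, hux⟩ := hex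
    have hSadj : ∀ w ∈ S, w = u ∨ G.Adj x₃ w := by
      intro w hw
      by_cases hc : G.Adj x₃ w
      · exact Or.inr hc
      · exact Or.inl (hsub w hw u huS hc hux)
    rcases hdomv u with hdS | hdT | hdx
    · -- u dominates S, so S = {u}
      have hSu : ∀ w ∈ S, w = u := by
        intro w hw
        rcases hdS w hw with rfl | ha
        · rfl
        · exact absurd ha (hSind u huS w hw)
      by_cases hTz : ∃ z ∈ T, ∀ w ∈ T, w = z
      · obtain ⟨z, hzT, hTall⟩ := hTz
        refine ⟨{u, z}, ?_, card2 u z⟩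
        intro v hv
        rcases hcover v with h1 | h2 | h3
        · exact absurd (by simp [hSu v h1]) hv
        · exact absurd (by simp [hTall v h2]) hv
        · subst h3
          have hne : v ≠ u := fun e => hxS (e ▸ huS)
          obtain ⟨p⟩ := hconn.preconnected v u
          cases p with
          | nil => exact absurd rfl hne
          | @cons _ b _ ha q =>
            have hb : b ∈ ({u, z} : Set V) := by
              rcases hcover b with hb1 | hb2 | hb3
              · simp [hSu b hb1]
              · simp [hTall b hb2]
              · exact absurd (hb3 ▸ ha) (G.irrefl)
            exact ⟨b, hb, ha.symm⟩
      · push_neg at hTz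
        refine main u huS hSadj ?_
        intro z hz
        rcases hdomv z with hd1 | hd2 | hd3
        · rcases hd1 u huS with rfl | ha
          · exact absurd hz (hST u huS)
          · exact Or.inl ha.symm
        · obtain ⟨w, hwT, hwz⟩ := hTz z hz
          rcases hd2 w hwT with rfl | ha
          · exact absurd rfl hwz
          · exact absurd ha (hTind z hz w hwT)
        · rcases hd3 with rfl | ha
          · exact absurd hz hxT
          · exact Or.inr ha.symm
    · exact main u huS hSadj (fun z hz => Or.inl ((hdT z hz).resolve_left
        (fun e => hST u huS (e ▸ hz))))
    · rcases hdx with rfl | ha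
      · exact absurd huS hxS
      · exact absurd ha.symm hux
  · push_neg at hex
    obtain ⟨u, huS⟩ := hSne
    by_cases hTz : ∃ z ∈ T, ∀ w ∈ T, w = z
    · obtain ⟨z, hzT, hTall⟩ := hTz
      refine ⟨{x₃, z}, ?_, card2 x₃ z⟩
      intro v hv
      rcases hcover v with h1 | h2 | h3
      · exact ⟨x₃, by simp, hex v h1⟩
      · exact absurd (by simp [hTall v h2]) hv
      · exact absurd (by simp [h3]) hv
    · push_neg at hTz
      refine main u huS (fun w hw => Or.inr (hex w hw)) ?_
      intro z hz
      rcases hdomv z with hd1 | hd2 | hd3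
      · rcases hd1 u huS with rfl | ha
        · exact absurd hz (hST u huS)
        · exact Or.inl ha.symm
      · obtain ⟨w, hwT, hwz⟩ := hTz z hz
        rcases hd2 w hwT with rfl | ha
        · exact absurd rfl hwz
        · exact absurd ha (hTind z hz w hwT)
      · rcases hd3 with rfl | ha
        · exact absurd hz hxT
        · exact Or.inr ha.symm

lemma derive {V : Type*} [Fintype V] (G : SimpleGraph V) (hconn : G.Connected)
    (hγ : domNum G = 3) (C : Fin 3 → Set V) (hC : IsDominatorColoring G C)
    (x₃ : V) (h3 : C 2 = {x₃}) (i j : Fin 3) (hij : i ≠ j) (hi2 : i ≠ 2) (hj2 : j ≠ 2) :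
    ∃ u v, u ∈ C i ∧ v ∈ C i ∧ u ≠ v ∧ ¬ G.Adj x₃ u ∧ ¬ G.Adj x₃ v := by
  obtain ⟨⟨huniq, hnonempty, hind⟩, hdomv⟩ := hC
  have hdisj : ∀ a b : Fin 3, a ≠ b → ∀ v, v ∈ C a → v ∉ C b := by
    intro a b hab v hva hvb
    obtain ⟨k, _, hk⟩ := huniq v
    exact hab ((hk a hva).trans (hk b hvb).symm)
  have hx2 : x₃ ∈ C 2 := by rw [h3]; exact rfl
  refine key_lemma G hconn hγ (C i) (C j) x₃ (hnonempty i) (hind i) (hind j)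
    (fun v hv => hdisj i j hij v hv) (hdisj 2 i (Ne.symm hi2) x₃ hx2)
    (hdisj 2 j (Ne.symm hj2) x₃ hx2) ?_ ?_
  · intro v
    obtain ⟨k, hk, _⟩ := huniq v
    have : k = i ∨ k = j ∨ k = 2 := by omega
    rcases this with rfl | rfl | rfl
    · exact Or.inl hk
    · exact Or.inr (Or.inl hk)
    · right; right; rw [h3] at hk; exact hk
  · intro v
    obtain ⟨k, hk⟩ := hdomv v
    have : k = i ∨ k = j ∨ k = 2 := by omega
    rcases this with rfl | rfl | rfl
    · exact Or.inl hk
    · exact Or.inr (Or.inl hk)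
    · right; right; rw [h3] at hk; exact hk x₃ rfl

end Aux

/-- If `G` is a connected `D(3)` graph and `C = (V_1, V_2, V_3)`
is a dominator coloring of `G` with exactly 3 color classes such that
`V_3 = {x₃}`, then at least two vertices of `V_1` are non-adjacent to `x₃` and
at least two vertices of `V_2` are non-adjacent to `x₃`. -/
theorem stmt_12 {V : Type*} [Fintype V] (G : SimpleGraph V)
    (hconn : G.Connected) (hDk : IsDk G 3)
    (C : Fin 3 → Set V) (hC : IsDominatorColoring G C)
    (x₃ : V) (h3 : C 2 = {x₃}) :
    (∃ u v, u ∈ C 0 ∧ v ∈ C 0 ∧ u ≠ v ∧ ¬ G.Adj x₃ u ∧ ¬ G.Adj x₃ v) ∧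
    (∃ u v, u ∈ C 1 ∧ v ∈ C 1 ∧ u ≠ v ∧ ¬ G.Adj x₃ u ∧ ¬ G.Adj x₃ v) := by
  exact ⟨derive G hconn hDk.1 C hC x₃ h3 0 1 (by decide) (by decide) (by decide),
    derive G hconn hDk.1 C hC x₃ h3 1 0 (by decide) (by decide) (by decide)⟩
end

section
/- Let G be a finite simple connected graph admitting a dominator coloring C = (V_1, V_2, V_3, V_4) with exactly 4 color classes, each of size at least 2. Suppose there exist three pairwise distinct indices i, j, l ∈ {1, 2, 3, 4} such that there is a chain V_i → V_j → V_l. Then G is not a D(4) graph, i.e., it is not the case that γ(G) = χ(G) = χ_d(G) = 4. -/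
open SimpleGraph

/-- Let `G` be a finite simple connected graph with a dominator
coloring `C = (V_1, V_2, V_3, V_4)` with exactly 4 color classes, each of size
at least 2. If there is a chain `V_i → V_j → V_l` for pairwise distinct
indices `i, j, l`, then `G` is not a `D(4)` graph. -/
theorem stmt_13 {V : Type*} [Fintype V] (G : SimpleGraph V)
    (hconn : G.Connected)
    (C : Fin 4 → Set V) (hC : IsDominatorColoring G C)
    (hsize : ∀ i : Fin 4, 2 ≤ (C i).ncard)
    (i j l : Fin 4) (hij : i ≠ j) (hjl : j ≠ l) (hil : i ≠ l)
    (h1 : ∃ x ∈ C i, ∀ u ∈ C j, G.Adj x u)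
    (h2 : ∃ x ∈ C j, ∀ u ∈ C l, G.Adj x u)
    (h3 : ∃ x ∈ C l, ∀ u ∈ C i, G.Adj x u) :
    ¬ IsDk G 4 := by
  intro hDk
  have hγ : domNum G = 4 := hDk.1
  obtain ⟨⟨huniq, hne, hind⟩, hdom⟩ := hC
  obtain ⟨xi, hxi, hxij⟩ := h1
  obtain ⟨xj, hxj, hxjl⟩ := h2
  obtain ⟨xl, hxl, hxli⟩ := h3
  set D : Set V := {xi, xj, xl} with hD
  -- no vertex dominates its own class (classes have size ≥ 2)
  have key : ∀ v t, v ∈ C t → ¬ DominatesClass G v (C t) := by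
    intro v t hv hd
    have hsub : C t ⊆ {v} := by
      intro u hu
      rcases hd u hu with h | h
      · exact h ▸ rfl
      · exact absurd h (hind t v hv u hu)
    have h1 : (C t).ncard ≤ ({v} : Set V).ncard :=
      Set.ncard_le_ncard hsub (Set.finite_singleton v)
    have h2 : ({v} : Set V).ncard = 1 := Set.ncard_singleton v
    have := hsize t
    omega
  have hDdom : IsDomSet G D := by
    intro v hv
    obtain ⟨t0, ht0, -⟩ := huniq v
    by_cases h0i : t0 = i
    · exact ⟨xl, by simp [hD], hxli v (h0i ▸ ht0)⟩
    by_cases h0j : t0 = j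
    · exact ⟨xi, by simp [hD], hxij v (h0j ▸ ht0)⟩
    by_cases h0l : t0 = l
    · exact ⟨xj, by simp [hD], hxjl v (h0l ▸ ht0)⟩
    obtain ⟨t, ht⟩ := hdom v
    have htt0 : t ≠ t0 := fun h => key v t0 ht0 (h ▸ ht)
    have htcase : t = i ∨ t = j ∨ t = l := by
      have hall : ∀ (a b c d e : Fin 4), a ≠ b → b ≠ c → a ≠ c → d ≠ a → d ≠ b →
          d ≠ c → e ≠ d → (e = a ∨ e = b ∨ e = c) := by decide
      exact hall i j l t0 t hij hjl hil h0i h0j h0l htt0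
    rcases htcase with h | h | h
    · rcases (h ▸ ht) xi hxi with h' | h'
      · exact absurd (show v ∈ D by simp [hD, ← h']) hv
      · exact ⟨xi, by simp [hD], h'.symm⟩
    · rcases (h ▸ ht) xj hxj with h' | h'
      · exact absurd (show v ∈ D by simp [hD, ← h']) hv
      · exact ⟨xj, by simp [hD], h'.symm⟩
    · rcases (h ▸ ht) xl hxl with h' | h'
      · exact absurd (show v ∈ D by simp [hD, ← h']) hv
      · exact ⟨xl, by simp [hD], h'.symm⟩
  have hmem : D.ncard ∈ {n | ∃ D' : Set V, IsDomSet G D' ∧ D'.ncard = n} :=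
    ⟨D, hDdom, rfl⟩
  have hle : domNum G ≤ D.ncard := Nat.sInf_le hmem
  have hcard : D.ncard ≤ 3 := by
    have h1 := Set.ncard_insert_le xi ({xj, xl} : Set V)
    have h2 := Set.ncard_insert_le xj ({xl} : Set V)
    have h3 : ({xl} : Set V).ncard = 1 := Set.ncard_singleton xl
    simp only [hD]
    omega
  omega
end

section
/- Let G be a connected D(4) graph and let C = (V_1, V_2, V_3, V_4) be any dominator coloring of G with exactly 4 color classes. Then at most one of the four color classes is a singleton. -/
open SimpleGraph

/-!
Let `{a}` and `{b}` be two singleton classes and `A`, `B` the other two. If `a` and `b` were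
not adjacent, merging `{a}` and `{b}` would give a proper 3-coloring, so `a ∼ b` and `a`
dominates both singleton classes. Every vertex dominates some class. If some `x` dominates `A`
and some `y` dominates `B`, then `{a, x, y}` is dominating. Otherwise, say no vertex dominates
`A`: then every vertex dominates `{a}`, `{b}` or `B`, so `{a, b, y}` is dominating for any
`y ∈ B`. Either way `γ(G) ≤ 3`.
-/

section DominatorColoring

variable {V : Type*} {G : SimpleGraph V}

theorem SimpleGraph.Coloring.colorable_card_sub_one {α : Type*} [Fintype α] [DecidableEq α]
    (c : G.Coloring α) {p q : α} (hpq : p ≠ q)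
    (h : ∀ u w, c u = p → c w = q → ¬ G.Adj u w) : G.Colorable (Fintype.card α - 1) := by
  let merge : α → {x // x ≠ q} := fun x => if hx : x = q then ⟨p, hpq⟩ else ⟨x, hx⟩
  have hvalid : ∀ {u w}, G.Adj u w → merge (c u) ≠ merge (c w) := by
    intro u w huw heq
    by_cases hu : c u = q <;> by_cases hw : c w = q <;>
      simp only [merge, hu, hw, dite_true, dite_false, Subtype.mk.injEq] at heq
    · exact c.valid huw (hu.trans hw.symm)
    · exact h w u heq.symm hu huw.symm
    · exact h u w heq hw huw
    · exact c.valid huw heq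
  simpa [Fintype.card_subtype_compl] using (Coloring.mk (merge ∘ c) hvalid).colorable

section Coloring

variable {k : ℕ} {C : Fin k → Set V}

noncomputable def IsProperColoring.toColoring (hC : IsProperColoring G C) : G.Coloring (Fin k) :=
  Coloring.mk (fun v => (hC.1 v).exists.choose) fun {u w} huw heq =>
    hC.2.2 _ u (hC.1 u).exists.choose_spec w (heq ▸ (hC.1 w).exists.choose_spec) huw

theorem IsProperColoring.toColoring_eq_iff (hC : IsProperColoring G C) {v : V} {i : Fin k} :
    hC.toColoring v = i ↔ v ∈ C i :=
  ⟨fun h => h ▸ (hC.1 v).exists.choose_spec,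
    fun h => (hC.1 v).unique (hC.1 v).exists.choose_spec h⟩

theorem IsProperColoring.adj_of_singleton_classes (hC : IsProperColoring G C)
    (hχ : ¬ G.Colorable (k - 1)) {i j : Fin k} (hij : i ≠ j) {a b : V}
    (ha : C i = {a}) (hb : C j = {b}) : G.Adj a b := by
  by_contra hab
  have hcol := hC.toColoring.colorable_card_sub_one hij fun u w hu hw => by
    rw [hC.toColoring_eq_iff, ha] at hu
    rw [hC.toColoring_eq_iff, hb] at hw
    rwa [hu, hw]
  exact hχ (by simpa using hcol)

end Coloring

theorem isDomSet_of_forall_exists_dominatesClass {ι : Type*} {C : ι → Set V} {D : Set V}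
    (hcover : ∀ v, ∃ i, v ∈ C i) (hD : ∀ i, ∃ d ∈ D, DominatesClass G d (C i)) :
    IsDomSet G D := by
  intro v hv
  obtain ⟨i, hvi⟩ := hcover v
  obtain ⟨d, hdD, hd⟩ := hD i
  exact ⟨d, hdD, (hd v hvi).resolve_left fun h => hv (h ▸ hdD)⟩

theorem isDomSet_of_forall_dominatesClass_meets {D : Set V}
    (hD : ∀ v, ∃ S, DominatesClass G v S ∧ ∃ d ∈ D, d ∈ S) : IsDomSet G D := by
  intro v hv
  obtain ⟨S, hvS, d, hdD, hdS⟩ := hD v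
  exact ⟨d, hdD, ((hvS d hdS).resolve_left fun h => hv (h ▸ hdD)).symm⟩

theorem IsDominatorColoring.exists_isDomSet_triple {n : ℕ} {C : Fin n → Set V}
    (hC : IsDominatorColoring G C) {i j k l : Fin n}
    (hcover : ∀ m, m = i ∨ m = j ∨ m = k ∨ m = l) {a b : V}
    (ha : C i = {a}) (hb : C j = {b}) (hab : G.Adj a b) :
    ∃ x y z : V, IsDomSet G {x, y, z} := by
  by_cases hkl : (∃ x, DominatesClass G x (C k)) ∧ ∃ y, DominatesClass G y (C l)
  · obtain ⟨⟨x, hx⟩, ⟨y, hy⟩⟩ := hkl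
    refine ⟨a, x, y, isDomSet_of_forall_exists_dominatesClass (fun v => (hC.1.1 v).exists)
      fun m => ?_⟩
    rcases hcover m with rfl | rfl | rfl | rfl
    · exact ⟨a, by simp, by simp [ha, DominatesClass]⟩
    · exact ⟨a, by simp, by simp [hb, DominatesClass, hab]⟩
    · exact ⟨x, by simp, hx⟩
    · exact ⟨y, by simp, hy⟩
  suffices key : ∀ {k l : Fin n}, (∀ m, m = i ∨ m = j ∨ m = k ∨ m = l) →
      (¬ ∃ x, DominatesClass G x (C k)) → ∃ x y z : V, IsDomSet G {x, y, z} by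
    rcases not_and_or.mp hkl with hk | hl
    · exact key hcover hk
    · exact key (k := l) (l := k) (fun m => by rcases hcover m with h | h | h | h <;> simp [h]) hl
  intro k l hcover hk
  obtain ⟨y, hy⟩ := hC.1.2.1 l
  refine ⟨a, b, y, isDomSet_of_forall_dominatesClass_meets fun v => ?_⟩
  obtain ⟨m, hvm⟩ := hC.2 v
  refine ⟨C m, hvm, ?_⟩
  rcases hcover m with rfl | rfl | rfl | rfl
  · exact ⟨a, by simp, by simp [ha]⟩
  · exact ⟨b, by simp, by simp [hb]⟩
  · exact absurd ⟨v, hvm⟩ hk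
  · exact ⟨y, by simp, hy⟩

theorem domNum_le_three_of_isDomSet [Fintype V] {x y z : V} (hD : IsDomSet G {x, y, z}) :
    domNum G ≤ 3 := by
  have hle : domNum G ≤ ({x, y, z} : Set V).ncard := Nat.sInf_le ⟨_, hD, rfl⟩
  grw [hle, Set.ncard_insert_le, Set.ncard_insert_le, Set.ncard_singleton]

theorem Fin.exists_cover_of_ne {i j : Fin 4} (hij : i ≠ j) :
    ∃ k l : Fin 4, ∀ m, m = i ∨ m = j ∨ m = k ∨ m = l := by
  revert i j; decide

end DominatorColoring

theorem stmt_14_general {V : Type*} [Fintype V] (G : SimpleGraph V)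
    (hDk : IsDk G 4)
    (C : Fin 4 → Set V) (hC : IsDominatorColoring G C) :
    ∀ i j : Fin 4, (∃ a : V, C i = {a}) → (∃ b : V, C j = {b}) → i = j := by
  rintro i j ⟨a, ha⟩ ⟨b, hb⟩
  by_contra hij
  obtain ⟨hγ, hχ, -⟩ := hDk
  have hab : G.Adj a b := hC.1.adj_of_singleton_classes (by
    rw [← chromaticNumber_le_iff_colorable, hχ]; decide) hij ha hb
  obtain ⟨k, l, hcover⟩ := Fin.exists_cover_of_ne hij
  obtain ⟨x, y, z, hD⟩ := hC.exists_isDomSet_triple hcover ha hb hab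
  have hγ3 := domNum_le_three_of_isDomSet hD
  omega

/-- If `G` is a connected `D(4)` graph and `C` is any dominator
coloring of `G` with exactly 4 color classes, then at most one of the four
color classes is a singleton. -/
theorem stmt_14 {V : Type*} [Fintype V] (G : SimpleGraph V)
    (hconn : G.Connected) (hDk : IsDk G 4)
    (C : Fin 4 → Set V) (hC : IsDominatorColoring G C) :
    ∀ i j : Fin 4, (∃ a : V, C i = {a}) → (∃ b : V, C j = {b}) → i = j :=
  stmt_14_general G hDk C hC
end

section
/- No connected D(4) graph admits a dominator coloring with exactly 4 color classes in which every color class has exactly 2 vertices. Equivalently, if G is a connected D(4) graph and C = (V_1, V_2, V_3, V_4) is a dominator coloring of G with exactly 4 color classes, then not all of |V_1|, |V_2|, |V_3|, |V_4| equal 2. -/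
open SimpleGraph

/-! ### Auxiliary decidable core -/

def gval (n m : Nat) : Nat :=
  if n / 3^m % 3 < m/2 then n / 3^m % 3 else n / 3^m % 3 + 1

def covN (n d1 d2 d3 : Nat) : Bool :=
  (List.range 8).all fun m =>
    m == d1 || m == d2 || m == d3 ||
    d1/2 == gval n m || d2/2 == gval n m || d3/2 == gval n m ||
    gval n d1 == m/2 || gval n d2 == m/2 || gval n d3 == m/2

def pairN (n s : Nat) : Bool := (List.range 8).all fun m => gval n m == (m/2) ^^^ s

def conclN (n : Nat) : Bool :=
  covN n 0 2 4 || covN n 0 2 6 || covN n 0 4 6 || covN n 2 4 6 ||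
  covN n 0 2 5 || covN n 0 2 7 || pairN n 1 || pairN n 2 || pairN n 3

def chkP : Nat → Nat → Bool
  | a, 0 => conclN a
  | a, k+1 => chkP a k && chkP (a + 2^k) k

set_option maxHeartbeats 12000000 in
set_option maxRecDepth 10000 in
lemma allN : chkP 0 13 = true := by decide

lemma chkP_sem : ∀ k a, chkP a k = true → ∀ n, a ≤ n → n < a + 2^k → conclN n = true := by
  intro k
  induction k with
  | zero =>
    intro a h n h1 h2
    rw [chkP] at h
    have : n = a := by omega
    rwa [this]
  | succ k ih =>
    intro a h n h1 h2
    rw [chkP, Bool.and_eq_true] at h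
    rcases (by omega : n < a + 2^k ∨ a + 2^k ≤ n) with h3 | h3
    · exact ih a h.1 n h1 h3
    · exact ih (a + 2^k) h.2 n h3
        (by have : (2:Nat)^(k+1) = 2^k + 2^k := by ring
            omega)

lemma conclN_true (n : Nat) (h : n < 8192) : conclN n = true :=
  chkP_sem 13 0 allN n (by omega) (by simpa using h)

def md2 (m : Fin 8) : Fin 4 := ⟨m.val / 2, by omega⟩

lemma key (g : Fin 8 → Fin 4) (h : ∀ m : Fin 8, g m ≠ md2 m) :
    (∃ d1 d2 d3 : Fin 8, ∀ m : Fin 8,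
      m = d1 ∨ m = d2 ∨ m = d3 ∨
      md2 d1 = g m ∨ md2 d2 = g m ∨ md2 d3 = g m ∨
      g d1 = md2 m ∨ g d2 = md2 m ∨ g d3 = md2 m) ∨
    (∃ p : Fin 4 → Fin 4, (∀ i, p (p i) = i) ∧ (∀ i, p i ≠ i) ∧ ∀ m, g m = p (md2 m)) := by
  have hdg : ∀ k : Fin 8, ∃ x, x < 3 ∧ (if x < k.val / 2 then x else x + 1) = (g k).val := by
    intro k
    have h1 := (g k).isLt
    have h2 : (g k).val ≠ k.val / 2 := fun hh => h k (Fin.ext hh)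
    have h3 := k.isLt
    rcases Nat.lt_or_ge (g k).val (k.val / 2) with hl | hl
    · exact ⟨(g k).val, by omega, if_pos hl⟩
    · refine ⟨(g k).val - 1, by omega, ?_⟩
      rw [if_neg (by omega)]; omega
  choose x hx3 hxv using hdg
  obtain ⟨n, hdig, hn⟩ : ∃ n : ℕ, (∀ m : Fin 8, n / 3 ^ m.val % 3 = x m) ∧ n < 8192 := by
    have b0 := hx3 0; have b1 := hx3 1; have b2 := hx3 2; have b3 := hx3 3
    have b4 := hx3 4; have b5 := hx3 5; have b6 := hx3 6; have b7 := hx3 7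
    refine ⟨x 0 + 3 * x 1 + 9 * x 2 + 27 * x 3 + 81 * x 4 + 243 * x 5 + 729 * x 6 + 2187 * x 7,
      fun m => ?_, by omega⟩
    fin_cases m <;> simp <;> omega
  have hgv : ∀ m : Fin 8, gval n m.val = (g m).val := by
    intro m
    unfold gval
    rw [hdig m]
    exact hxv m
  have hc := conclN_true n hn
  unfold conclN at hc
  simp only [Bool.or_eq_true] at hc
  have hcov : ∀ d1 d2 d3 : Fin 8, covN n d1.val d2.val d3.val = true →
      ∀ m : Fin 8, m = d1 ∨ m = d2 ∨ m = d3 ∨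
        md2 d1 = g m ∨ md2 d2 = g m ∨ md2 d3 = g m ∨
        g d1 = md2 m ∨ g d2 = md2 m ∨ g d3 = md2 m := by
    intro d1 d2 d3 hcv m
    have hm := List.all_eq_true.mp hcv m.val (List.mem_range.mpr m.isLt)
    simp only [Bool.or_eq_true, beq_iff_eq] at hm
    rw [hgv m, hgv d1, hgv d2, hgv d3] at hm
    rcases hm with ((((((((hh|hh)|hh)|hh)|hh)|hh)|hh)|hh)|hh)
    · exact Or.inl (Fin.ext hh)
    · exact Or.inr (Or.inl (Fin.ext hh))
    · exact Or.inr (Or.inr (Or.inl (Fin.ext hh)))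
    · exact Or.inr (Or.inr (Or.inr (Or.inl (Fin.ext hh))))
    · exact Or.inr (Or.inr (Or.inr (Or.inr (Or.inl (Fin.ext hh)))))
    · exact Or.inr (Or.inr (Or.inr (Or.inr (Or.inr (Or.inl (Fin.ext hh))))))
    · exact Or.inr (Or.inr (Or.inr (Or.inr (Or.inr (Or.inr (Or.inl (Fin.ext hh)))))))
    · exact Or.inr (Or.inr (Or.inr (Or.inr (Or.inr (Or.inr (Or.inr (Or.inl (Fin.ext hh))))))))
    · exact Or.inr (Or.inr (Or.inr (Or.inr (Or.inr (Or.inr (Or.inr (Or.inr (Fin.ext hh))))))))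
  have hpair : ∀ (s : Nat) (p : Fin 4 → Fin 4),
      (∀ m : Fin 8, (p (md2 m)).val = (m.val / 2) ^^^ s) → pairN n s = true →
      ∀ m, g m = p (md2 m) := by
    intro s p hp hpn m
    have hm := List.all_eq_true.mp hpn m.val (List.mem_range.mpr m.isLt)
    simp only [beq_iff_eq] at hm
    rw [hgv m] at hm
    exact Fin.ext (by rw [hm, hp m])
  rcases hc with ((((((((hh|hh)|hh)|hh)|hh)|hh)|hh)|hh)|hh)
  · exact Or.inl ⟨0, 2, 4, hcov 0 2 4 hh⟩
  · exact Or.inl ⟨0, 2, 6, hcov 0 2 6 hh⟩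
  · exact Or.inl ⟨0, 4, 6, hcov 0 4 6 hh⟩
  · exact Or.inl ⟨2, 4, 6, hcov 2 4 6 hh⟩
  · exact Or.inl ⟨0, 2, 5, hcov 0 2 5 hh⟩
  · exact Or.inl ⟨0, 2, 7, hcov 0 2 7 hh⟩
  · exact Or.inr ⟨![1,0,3,2], by decide, by decide,
      hpair 1 ![1,0,3,2] (by decide) hh⟩
  · exact Or.inr ⟨![2,3,0,1], by decide, by decide,
      hpair 2 ![2,3,0,1] (by decide) hh⟩
  · exact Or.inr ⟨![3,2,1,0], by decide, by decide,
      hpair 3 ![3,2,1,0] (by decide) hh⟩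

lemma cross_dom {V : Type*} (G : SimpleGraph V) (hconn : G.Connected)
    (C : Fin 4 → Set V) (p : Fin 4 → Fin 4) (hinv : ∀ i, p (p i) = i) (hnf : ∀ i, p i ≠ i)
    (huniq : ∀ v : V, ∃! i, v ∈ C i)
    (hcard : ∀ i, (C i).ncard = 2)
    (hadj : ∀ (v : V) (j : Fin 4), v ∈ C j → ∀ u ∈ C (p j), G.Adj v u) :
    ∃ D : Set V, IsDomSet G D ∧ D.ncard ≤ 3 := by
  classical
  choose ca cb hne hCe using fun i => Set.ncard_eq_two.mp (hcard i)
  have hmem : ∀ i, ca i ∈ C i ∧ cb i ∈ C i := by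
    intro i
    rw [hCe i]
    exact ⟨Or.inl rfl, Or.inr rfl⟩
  set c : Fin 4 := if p 0 = 1 then 2 else 1 with hc
  have hc0 : c ≠ 0 ∧ c ≠ p 0 := by
    by_cases hp : p 0 = 1
    · rw [hc, if_pos hp, hp]; exact ⟨by decide, by decide⟩
    · rw [hc, if_neg hp]
      exact ⟨by decide, fun hh => hp hh.symm⟩
  set S : Set V := C 0 ∪ C (p 0) with hS
  have hv0 : ca 0 ∈ S := Or.inl (hmem 0).1
  have hw0 : ca c ∉ S := by
    intro hm
    obtain ⟨i, _, hun⟩ := huniq (ca c)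
    rcases hm with hm | hm
    · exact hc0.1 ((hun c (hmem c).1).symm ▸ (hun 0 hm) ▸ rfl)
    · exact hc0.2 ((hun c (hmem c).1).symm ▸ (hun (p 0) hm) ▸ rfl)
  obtain ⟨W⟩ := hconn.preconnected (ca 0) (ca c)
  obtain ⟨d, _, hdS, hdnS⟩ := W.exists_boundary_dart S hv0 hw0
  set va := d.fst with hva
  set vb := d.snd with hvb
  have hab : G.Adj va vb := d.adj
  have hiaor : ∃ ia : Fin 4, va ∈ C ia ∧ (ia = 0 ∨ ia = p 0) := by
    rcases hdS with hm | hm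
    · exact ⟨0, hm, Or.inl rfl⟩
    · exact ⟨p 0, hm, Or.inr rfl⟩
  obtain ⟨ia, hiaC, hiaor⟩ := hiaor
  obtain ⟨ib, hibC, _⟩ := huniq vb
  have hib0 : ib ≠ 0 ∧ ib ≠ p 0 := by
    constructor <;> intro hh <;> apply hdnS
    · exact Or.inl (hh ▸ hibC)
    · exact Or.inr (hh ▸ hibC)
  have hall : ∀ j : Fin 4, j = ia ∨ j = p ia ∨ j = ib ∨ j = p ib := by
    have hpia : p ia = 0 ∨ p ia = p 0 := by
      rcases hiaor with hh | hh
      · exact Or.inr (by rw [hh])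
      · exact Or.inl (by rw [hh, hinv])
    have hpib : p ib ≠ 0 ∧ p ib ≠ p 0 := by
      constructor <;> intro hh
      · exact hib0.2 (by rw [← hinv ib, hh])
      · exact hib0.1 (by rw [← hinv ib, hh, hinv])
    have d1 : ia ≠ p ia := fun hh => hnf ia hh.symm
    have d2 : ib ≠ p ib := fun hh => hnf ib hh.symm
    have d3 : ia ≠ ib := by
      intro hh
      rcases hiaor with h4 | h4
      · exact hib0.1 (hh ▸ h4)
      · exact hib0.2 (hh ▸ h4)
    have d4 : ia ≠ p ib := by
      intro hh
      rcases hiaor with h4 | h4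
      · exact hpib.1 (hh ▸ h4)
      · exact hpib.2 (hh ▸ h4)
    have d5 : p ia ≠ ib := by
      intro hh
      rcases hpia with h4 | h4
      · exact hib0.1 (hh ▸ h4)
      · exact hib0.2 (hh ▸ h4)
    have d6 : p ia ≠ p ib := by
      intro hh
      exact d3 (by rw [← hinv ia, hh, hinv])
    have hfin : ∀ (w x y z j : Fin 4), w ≠ x → w ≠ y → w ≠ z → x ≠ y → x ≠ z → y ≠ z →
        (j = w ∨ j = x ∨ j = y ∨ j = z) := by decide
    exact fun j => hfin ia (p ia) ib (p ib) j d1 d3 d4 d5 d6 d2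
  set xb : V := if vb = ca ib then cb ib else ca ib with hxb
  have hxbC : xb ∈ C ib := by
    rw [hxb]
    split_ifs
    · exact (hmem ib).2
    · exact (hmem ib).1
  set D : Set V := {ca ia, cb ia, xb} with hD
  have hvaD : va ∈ D := by
    have := hiaC
    rw [hCe ia] at this
    simp only [Set.mem_insert_iff, Set.mem_singleton_iff] at this
    rcases this with hh | hh
    · rw [hh]; exact Set.mem_insert _ _
    · rw [hh]; exact Set.mem_insert_of_mem _ (Set.mem_insert _ _)
  refine ⟨D, ?_, ?_⟩
  · intro v hv
    obtain ⟨j, hj, _⟩ := huniq v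
    rcases hall j with hj4 | hj4 | hj4 | hj4
    · -- v ∈ C ia ⊆ D
      exfalso
      apply hv
      rw [hj4] at hj
      rw [hCe ia] at hj
      simp only [Set.mem_insert_iff, Set.mem_singleton_iff] at hj
      rcases hj with hh | hh
      · rw [hh]; exact Set.mem_insert _ _
      · rw [hh]; exact Set.mem_insert_of_mem _ (Set.mem_insert _ _)
    · -- v ∈ C (p ia); adjacent to ca ia
      refine ⟨ca ia, Set.mem_insert _ _, ?_⟩
      have hm : ca ia ∈ C (p (p ia)) := by rw [hinv]; exact (hmem ia).1
      exact (hadj v (p ia) (hj4 ▸ hj) (ca ia) hm).symm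
    · -- v ∈ C ib : v is b (adjacent to va) or xb ∈ D
      rw [hj4, hCe ib] at hj
      by_cases hbv : v = vb
      · exact ⟨va, hvaD, hbv ▸ hab⟩
      · exfalso
        apply hv
        have hvxb : v = xb := by
          have hvbm := hibC
          rw [hCe ib] at hvbm
          simp only [Set.mem_insert_iff, Set.mem_singleton_iff] at hj hvbm
          rw [hxb]
          rcases hj with hh | hh <;> rcases hvbm with h2 | h2
          · exact absurd (hh.trans h2.symm) hbv
          · rw [if_neg (fun hq => hne ib (hq.symm.trans h2))]
            exact hh
          · rw [if_pos h2]
            exact hh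
          · exact absurd (hh.trans h2.symm) hbv
        rw [hvxb]
        exact Set.mem_insert_of_mem _ (Set.mem_insert_of_mem _ rfl)
    · -- v ∈ C (p ib); adjacent to xb
      refine ⟨xb, Set.mem_insert_of_mem _ (Set.mem_insert_of_mem _ rfl), ?_⟩
      have hm : xb ∈ C (p (p ib)) := by rw [hinv]; exact hxbC
      exact (hadj v (p ib) (hj4 ▸ hj) xb hm).symm
  · calc D.ncard ≤ ({cb ia, xb} : Set V).ncard + 1 := Set.ncard_insert_le _ _
      _ ≤ (({xb} : Set V).ncard + 1) + 1 := Nat.add_le_add_right (Set.ncard_insert_le _ _) 1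
      _ = 3 := by rw [Set.ncard_singleton]



/-- No connected `D(4)` graph admits a dominator coloring with
exactly 4 color classes in which every color class has exactly 2 vertices. -/
theorem stmt_15 {V : Type*} [Fintype V] (G : SimpleGraph V)
    (hconn : G.Connected) (hDk : IsDk G 4)
    (C : Fin 4 → Set V) (hC : IsDominatorColoring G C) :
    ¬ (∀ i : Fin 4, (C i).ncard = 2) := by
  intro hcard
  obtain ⟨⟨huniq, hnem, hind⟩, hdom⟩ := hC
  have hDk4 : domNum G = 4 := hDk.1
  -- every vertex fully dominates some class not containing it
  have hf : ∀ v : V, ∃ j : Fin 4, v ∉ C j ∧ ∀ u ∈ C j, G.Adj v u := by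
    intro v
    obtain ⟨j, hj⟩ := hdom v
    have hvj : v ∉ C j := by
      intro hv
      obtain ⟨a, b, hab, hCe⟩ := Set.ncard_eq_two.mp (hcard j)
      have hv' := hv
      rw [hCe] at hv'
      simp only [Set.mem_insert_iff, Set.mem_singleton_iff] at hv'
      have hamem : a ∈ C j := by rw [hCe]; exact Or.inl rfl
      have hbmem : b ∈ C j := by rw [hCe]; exact Or.inr rfl
      rcases hv' with hv' | hv'
      · rcases hj b hbmem with he | he
        · exact hab (hv' ▸ he).symm
        · exact hind j v hv b hbmem he
      · rcases hj a hamem with he | he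
        · exact hab (hv' ▸ he)
        · exact hind j v hv a hamem he
    exact ⟨j, hvj, fun u hu => (hj u hu).resolve_left (fun he => hvj (he ▸ hu))⟩
  choose f hf1 hf2 using hf
  choose ca cb hne hCe using fun i => Set.ncard_eq_two.mp (hcard i)
  have hmem : ∀ i, ca i ∈ C i ∧ cb i ∈ C i := by
    intro i
    rw [hCe i]
    exact ⟨Or.inl rfl, Or.inr rfl⟩
  -- enumeration of vertices
  set e : Fin 8 → V := fun m => if m.val % 2 = 0 then ca (md2 m) else cb (md2 m) with he
  have heC : ∀ m, e m ∈ C (md2 m) := by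
    intro m
    show (if m.val % 2 = 0 then ca (md2 m) else cb (md2 m)) ∈ C (md2 m)
    by_cases h2 : m.val % 2 = 0
    · rw [if_pos h2]; exact (hmem (md2 m)).1
    · rw [if_neg h2]; exact (hmem (md2 m)).2
  have hsur : ∀ (v : V) (j : Fin 4), v ∈ C j → ∃ m : Fin 8, e m = v ∧ md2 m = j := by
    intro v j hv
    have hj2 : (2 * j.val : ℕ) < 8 := by omega
    have hj3 : (2 * j.val + 1 : ℕ) < 8 := by omega
    have hmd : md2 ⟨2 * j.val, hj2⟩ = j := Fin.ext (by show 2 * j.val / 2 = j.val; omega)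
    have hmd' : md2 ⟨2 * j.val + 1, hj3⟩ = j := Fin.ext (by show (2 * j.val + 1) / 2 = j.val; omega)
    rw [hCe j] at hv
    simp only [Set.mem_insert_iff, Set.mem_singleton_iff] at hv
    rcases hv with hv | hv
    · refine ⟨⟨2 * j.val, hj2⟩, ?_, hmd⟩
      show (if (2 * j.val) % 2 = 0 then ca (md2 ⟨2 * j.val, hj2⟩) else cb (md2 ⟨2 * j.val, hj2⟩)) = v
      rw [if_pos (by omega), hmd, hv]
    · refine ⟨⟨2 * j.val + 1, hj3⟩, ?_, hmd'⟩
      show (if (2 * j.val + 1) % 2 = 0 then ca (md2 ⟨2 * j.val + 1, hj3⟩) else cb (md2 ⟨2 * j.val + 1, hj3⟩)) = v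
      rw [if_neg (by omega), hmd', hv]
  set g : Fin 8 → Fin 4 := fun m => f (e m) with hg
  have hgne : ∀ m, g m ≠ md2 m := by
    intro m hm
    have hmm : e m ∈ C (g m) := by rw [hm]; exact heC m
    exact hf1 (e m) hmm
  have hfinal : ∃ D : Set V, IsDomSet G D ∧ D.ncard ≤ 3 := by
    rcases key g hgne with ⟨d1, d2, d3, hcov⟩ | ⟨p, hinv, hnf, hp⟩
    · set D : Set V := {e d1, e d2, e d3} with hD
      have hds : IsDomSet G D := by
        intro v hv
        obtain ⟨j, hj, _⟩ := huniq v
        obtain ⟨m, hem, hmd⟩ := hsur v j hj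
        have hvC : v ∈ C (md2 m) := by rw [hmd]; exact hj
        have hmem1 : e d1 ∈ D := Set.mem_insert _ _
        have hmem2 : e d2 ∈ D := Set.mem_insert_of_mem _ (Set.mem_insert _ _)
        have hmem3 : e d3 ∈ D := Set.mem_insert_of_mem _ (Set.mem_insert_of_mem _ rfl)
        have fwd : ∀ dd : Fin 8, e dd ∈ D → md2 dd = g m → ∃ u ∈ D, G.Adj u v := by
          intro dd hdd hh
          refine ⟨e dd, hdd, ?_⟩
          have h1 : e dd ∈ C (f v) := by
            rw [← hem]
            show e dd ∈ C (g m)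
            rw [← hh]
            exact heC dd
          exact (hf2 v (e dd) h1).symm
        have bwd : ∀ dd : Fin 8, e dd ∈ D → g dd = md2 m → ∃ u ∈ D, G.Adj u v := by
          intro dd hdd hh
          refine ⟨e dd, hdd, hf2 (e dd) v ?_⟩
          show v ∈ C (g dd)
          rw [hh]
          exact hvC
        rcases hcov m with hh|hh|hh|hh|hh|hh|hh|hh|hh
        · exact absurd (by rw [← hem, hh]; exact hmem1) hv
        · exact absurd (by rw [← hem, hh]; exact hmem2) hv
        · exact absurd (by rw [← hem, hh]; exact hmem3) hv
        · exact fwd d1 hmem1 hh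
        · exact fwd d2 hmem2 hh
        · exact fwd d3 hmem3 hh
        · exact bwd d1 hmem1 hh
        · exact bwd d2 hmem2 hh
        · exact bwd d3 hmem3 hh
      refine ⟨D, hds, ?_⟩
      calc D.ncard ≤ ({e d2, e d3} : Set V).ncard + 1 := Set.ncard_insert_le _ _
        _ ≤ (({e d3} : Set V).ncard + 1) + 1 := Nat.add_le_add_right (Set.ncard_insert_le _ _) 1
        _ = 3 := by rw [Set.ncard_singleton]
    · have hadj : ∀ (v : V) (j : Fin 4), v ∈ C j → ∀ u ∈ C (p j), G.Adj v u := by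
        intro v j hv u hu
        obtain ⟨m, hem, hmd⟩ := hsur v j hv
        have h2 : f v = p j := by
          rw [← hem]
          show g m = p j
          rw [hp m, hmd]
        exact hf2 v u (by rw [h2]; exact hu)
      exact cross_dom G hconn C p hinv hnf huniq hcard hadj
  obtain ⟨D, hds, h3⟩ := hfinal
  have hle : domNum G ≤ D.ncard := Nat.sInf_le ⟨D, hds, rfl⟩
  omega
end

section
/- Let G be a connected D(4) graph admitting a dominator coloring C = (V_1, V_2, V_3, V_4) with exactly 4 color classes such that |V_1| ≥ 3 and |V_2| = |V_3| = |V_4| = 2. Then G contains K_{3,3} as a subgraph, i.e., there is an injective graph homomorphism from K_{3,3} into G. -/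
open SimpleGraph

/-- A three element set has `ncard ≤ 3`. -/
private lemma ncard_triple_le {V : Type*} (a b c : V) :
    ({a, b, c} : Set V).ncard ≤ 3 := by
  calc ({a, b, c} : Set V).ncard ≤ ({b, c} : Set V).ncard + 1 := Set.ncard_insert_le _ _
    _ ≤ (({c} : Set V).ncard + 1) + 1 := by
        have := Set.ncard_insert_le b ({c} : Set V); omega
    _ ≤ 3 := by simp

/-- Core construction: in the hard case where both members of the pair `P`
dominate `A`, if some member `u` of the pair `O1` has a neighbor in `A ∪ P`,
we get a dominating set of size ≤ 3. -/
private lemma dom_core {V : Type*} (G : SimpleGraph V)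
    (A P O1 O2 : Set V)
    (hcover : ∀ v, v ∈ A ∨ v ∈ P ∨ v ∈ O1 ∨ v ∈ O2)
    (hdom : ∀ v, ∃ K, (K = A ∨ K = P ∨ K = O1 ∨ K = O2) ∧ v ∉ K ∧ ∀ u ∈ K, G.Adj v u)
    (hT : ∀ t1 t2 t3 : V, (∀ u ∈ A, G.Adj t1 u) → (∀ u ∈ A, G.Adj t2 u) →
      (∀ u ∈ A, G.Adj t3 u) → t1 = t2 ∨ t1 = t3 ∨ t2 = t3)
    (x0 : V) (hx0 : x0 ∈ A)
    (s t : V) (hst : s ≠ t) (hsP : s ∈ P) (htP : ∀ v ∈ P, v = s ∨ v = t)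
    (hs : ∀ u ∈ A, G.Adj s u) (ht : ∀ u ∈ A, G.Adj t u)
    (u u' : V) (hu'O : u' ∈ O1) (hO1 : ∀ v ∈ O1, v = u ∨ v = u')
    (hcov_u : G.Adj u x0 ∨ G.Adj u s) :
    ∃ D : Set V, IsDomSet G D ∧ D.ncard ≤ 3 := by
  refine ⟨{x0, s, u'}, ?_, ncard_triple_le _ _ _⟩
  intro v hv
  simp only [Set.mem_insert_iff, Set.mem_singleton_iff, not_or] at hv
  obtain ⟨hvx0, hvs, hvu'⟩ := hv
  have hmx0 : x0 ∈ ({x0, s, u'} : Set V) := by simp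
  have hms : s ∈ ({x0, s, u'} : Set V) := by simp
  have hmu' : u' ∈ ({x0, s, u'} : Set V) := by simp
  by_cases hvt : v = t
  · exact ⟨x0, hmx0, by subst hvt; exact (ht x0 hx0).symm⟩
  by_cases hvu : v = u
  · subst hvu
    rcases hcov_u with h | h
    · exact ⟨x0, hmx0, h.symm⟩
    · exact ⟨s, hms, h.symm⟩
  obtain ⟨K, hK, hvK, hadj⟩ := hdom v
  rcases hK with rfl | rfl | rfl | rfl
  · -- K = A : v dominates A, so by hT it must equal s or t; contradiction
    rcases hT v s t hadj hs ht with h | h | h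
    · exact absurd h hvs
    · exact absurd h hvt
    · exact absurd h hst
  · exact ⟨s, hms, (hadj s hsP).symm⟩
  · exact ⟨u', hmu', (hadj u' hu'O).symm⟩
  · -- K = O2 : v is not in O2; locate v
    rcases hcover v with h | h | h | h
    · exact ⟨s, hms, hs v h⟩
    · rcases htP v h with rfl | rfl
      · exact absurd rfl hvs
      · exact absurd rfl hvt
    · rcases hO1 v h with rfl | rfl
      · exact absurd rfl hvu
      · exact absurd rfl hvu'
    · exact absurd h hvK

/-- Hard case: the pair `P = {z, z'}` consists entirely of vertices dominating
`A`. Then either a dominating set of size ≤ 3 exists, or `Q ∪ R` is a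
connected component, contradicting connectivity. -/
private lemma dom_hard {V : Type*} (G : SimpleGraph V) (hconn : G.Connected)
    (A P Q R : Set V)
    (hcover : ∀ v, v ∈ A ∨ v ∈ P ∨ v ∈ Q ∨ v ∈ R)
    (hdom : ∀ v, ∃ K, (K = A ∨ K = P ∨ K = Q ∨ K = R) ∧ v ∉ K ∧ ∀ u ∈ K, G.Adj v u)
    (hT : ∀ t1 t2 t3 : V, (∀ u ∈ A, G.Adj t1 u) → (∀ u ∈ A, G.Adj t2 u) →
      (∀ u ∈ A, G.Adj t3 u) → t1 = t2 ∨ t1 = t3 ∨ t2 = t3)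
    (x0 : V) (hx0 : x0 ∈ A)
    (z z' : V) (hzz' : z ≠ z') (hzP : z ∈ P) (hz'P : z' ∈ P)
    (hP2 : ∀ v ∈ P, v = z ∨ v = z')
    (hz : ∀ u ∈ A, G.Adj z u) (hz' : ∀ u ∈ A, G.Adj z' u)
    (q1 q2 : V) (hq1 : q1 ∈ Q) (hq2 : q2 ∈ Q) (hQ2 : ∀ v ∈ Q, v = q1 ∨ v = q2)
    (r1 r2 : V) (hr1 : r1 ∈ R) (hr2 : r2 ∈ R) (hR2 : ∀ v ∈ R, v = r1 ∨ v = r2)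
    (hPQ : z ∉ Q) (hPR : z ∉ R) :
    ∃ D : Set V, IsDomSet G D ∧ D.ncard ≤ 3 := by
  classical
  by_cases hedge : ∃ w y, (w ∈ Q ∨ w ∈ R) ∧ (y ∈ A ∨ y = z ∨ y = z') ∧ G.Adj w y
  · obtain ⟨w, y, hw, hy, hadj⟩ := hedge
    -- symmetricity helpers for swapping Q and R
    have hcover' : ∀ v, v ∈ A ∨ v ∈ P ∨ v ∈ R ∨ v ∈ Q := fun v => by
      rcases hcover v with h | h | h | h <;> tauto
    have hdom' : ∀ v, ∃ K, (K = A ∨ K = P ∨ K = R ∨ K = Q) ∧ v ∉ K ∧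
        ∀ u ∈ K, G.Adj v u := fun v => by
      obtain ⟨K, hK, h2, h3⟩ := hdom v
      exact ⟨K, by tauto, h2, h3⟩
    have hP2' : ∀ v ∈ P, v = z' ∨ v = z := fun v hv => (hP2 v hv).symm
    rcases hw with hwQ | hwR
    · -- w ∈ Q; let w' be the other member of Q
      obtain ⟨w', hw'Q, hQw⟩ : ∃ w', w' ∈ Q ∧ ∀ v ∈ Q, v = w ∨ v = w' := by
        rcases hQ2 w hwQ with rfl | rfl
        · exact ⟨q2, hq2, fun v hv => hQ2 v hv⟩
        · exact ⟨q1, hq1, fun v hv => (hQ2 v hv).symm⟩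
      rcases hy with hyA | hyz | hyz
      · exact dom_core G A P Q R hcover hdom hT y hyA z z' hzz' hzP hP2 hz hz'
          w w' hw'Q hQw (Or.inl hadj)
      · exact dom_core G A P Q R hcover hdom hT x0 hx0 z z' hzz' hzP hP2 hz hz'
          w w' hw'Q hQw (Or.inr (hyz ▸ hadj))
      · exact dom_core G A P Q R hcover hdom hT x0 hx0 z' z hzz'.symm hz'P hP2' hz' hz
          w w' hw'Q hQw (Or.inr (hyz ▸ hadj))
    · -- w ∈ R
      obtain ⟨w', hw'R, hRw⟩ : ∃ w', w' ∈ R ∧ ∀ v ∈ R, v = w ∨ v = w' := by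
        rcases hR2 w hwR with rfl | rfl
        · exact ⟨r2, hr2, fun v hv => hR2 v hv⟩
        · exact ⟨r1, hr1, fun v hv => (hR2 v hv).symm⟩
      rcases hy with hyA | hyz | hyz
      · exact dom_core G A P R Q hcover' hdom' hT y hyA z z' hzz' hzP hP2 hz hz'
          w w' hw'R hRw (Or.inl hadj)
      · exact dom_core G A P R Q hcover' hdom' hT x0 hx0 z z' hzz' hzP hP2 hz hz'
          w w' hw'R hRw (Or.inr (hyz ▸ hadj))
      · exact dom_core G A P R Q hcover' hdom' hT x0 hx0 z' z hzz'.symm hz'P hP2' hz' hz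
          w w' hw'R hRw (Or.inr (hyz ▸ hadj))
  · -- no edges from Q ∪ R to A ∪ {z, z'}: Q ∪ R is closed, contradicting connectivity
    exfalso
    push_neg at hedge
    have hclosed : ∀ w, (w ∈ Q ∨ w ∈ R) → ∀ y, G.Adj w y → (y ∈ Q ∨ y ∈ R) := by
      intro w hw y hadj
      rcases hcover y with h | h | h | h
      · exact absurd hadj (hedge w y hw (Or.inl h))
      · rcases hP2 y h with rfl | rfl
        · exact absurd hadj (hedge w y hw (Or.inr (Or.inl rfl)))
        · exact absurd hadj (hedge w y hw (Or.inr (Or.inr rfl)))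
      · exact Or.inl h
      · exact Or.inr h
    have key : ∀ (a b : V), G.Walk a b → (a ∈ Q ∨ a ∈ R) → (b ∈ Q ∨ b ∈ R) := by
      intro a b p
      induction p with
      | nil => exact id
      | cons h p ih => exact fun ha => ih (hclosed _ ha _ h)
    obtain ⟨p⟩ := hconn.preconnected q1 z
    rcases key q1 z p (Or.inl hq1) with h | h
    · exact hPQ h
    · exact hPR h

/-- Transversal case: if we can pick one vertex from each pair such that every
vertex dominating `A` is among the chosen vertices, we get a dominating set. -/
private lemma dom_trans {V : Type*} (G : SimpleGraph V)
    (A P Q R : Set V)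
    (hdom : ∀ v, ∃ K, (K = A ∨ K = P ∨ K = Q ∨ K = R) ∧ v ∉ K ∧ ∀ u ∈ K, G.Adj v u)
    (d1 d2 d3 : V) (h1 : d1 ∈ P) (h2 : d2 ∈ Q) (h3 : d3 ∈ R)
    (hTd : ∀ v, (∀ u ∈ A, G.Adj v u) → v = d1 ∨ v = d2 ∨ v = d3) :
    ∃ D : Set V, IsDomSet G D ∧ D.ncard ≤ 3 := by
  refine ⟨{d1, d2, d3}, ?_, ncard_triple_le _ _ _⟩
  intro v hv
  simp only [Set.mem_insert_iff, Set.mem_singleton_iff, not_or] at hv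
  obtain ⟨hv1, hv2, hv3⟩ := hv
  obtain ⟨K, hK, hvK, hadj⟩ := hdom v
  rcases hK with rfl | rfl | rfl | rfl
  · rcases hTd v hadj with h | h | h
    · exact absurd h hv1
    · exact absurd h hv2
    · exact absurd h hv3
  · exact ⟨d1, by simp, (hadj d1 h1).symm⟩
  · exact ⟨d2, by simp, (hadj d2 h2).symm⟩
  · exact ⟨d3, by simp, (hadj d3 h3).symm⟩

/-- If `G` is a connected `D(4)` graph with a dominator coloring
`C = (V_1, V_2, V_3, V_4)` with exactly 4 color classes such that `|V_1| ≥ 3`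
and `|V_2| = |V_3| = |V_4| = 2`, then `G` contains `K_{3,3}` as a subgraph. -/
theorem stmt_16 {V : Type*} [Fintype V] (G : SimpleGraph V)
    (hconn : G.Connected) (hDk : IsDk G 4)
    (C : Fin 4 → Set V) (hC : IsDominatorColoring G C)
    (h1 : 3 ≤ (C 0).ncard) (h2 : (C 1).ncard = 2) (h3 : (C 2).ncard = 2)
    (h4 : (C 3).ncard = 2) :
    ∃ f : Fin 3 ⊕ Fin 3 → V, Function.Injective f ∧
      ∀ a b : Fin 3 ⊕ Fin 3,
        (completeBipartiteGraph (Fin 3) (Fin 3)).Adj a b → G.Adj (f a) (f b) := by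
  classical
  obtain ⟨⟨hpart, hne, hind⟩, hdomc⟩ := hC
  -- every class has at least 2 elements
  have h2le : ∀ i, 1 < (C i).ncard := by
    intro i
    fin_cases i
    · show 1 < (C 0).ncard; omega
    · show 1 < (C 1).ncard; omega
    · show 1 < (C 2).ncard; omega
    · show 1 < (C 3).ncard; omega
  -- every vertex dominates a class it does not belong to, being adjacent to all of it
  have hdom' : ∀ v, ∃ i, v ∉ C i ∧ ∀ u ∈ C i, G.Adj v u := by
    intro v
    obtain ⟨i, hi⟩ := hdomc v
    have hvnot : v ∉ C i := by
      intro hv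
      obtain ⟨u, hu, hune⟩ := Set.exists_ne_of_one_lt_ncard (h2le i) v
      rcases hi u hu with h | h
      · exact hune h
      · exact hind i v hv u hu h
    refine ⟨i, hvnot, fun u hu => ?_⟩
    rcases hi u hu with h | h
    · exact absurd (h ▸ hu) hvnot
    · exact h
  have hcover : ∀ v, v ∈ C 0 ∨ v ∈ C 1 ∨ v ∈ C 2 ∨ v ∈ C 3 := by
    intro v
    obtain ⟨i, hi, -⟩ := hpart v
    fin_cases i
    · exact Or.inl hi
    · exact Or.inr (Or.inl hi)
    · exact Or.inr (Or.inr (Or.inl hi))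
    · exact Or.inr (Or.inr (Or.inr hi))
  have hdom'' : ∀ v, ∃ K, (K = C 0 ∨ K = C 1 ∨ K = C 2 ∨ K = C 3) ∧ v ∉ K ∧
      ∀ u ∈ K, G.Adj v u := by
    intro v
    obtain ⟨i, h1', h2'⟩ := hdom' v
    refine ⟨C i, ?_, h1', h2'⟩
    fin_cases i
    · exact Or.inl rfl
    · exact Or.inr (Or.inl rfl)
    · exact Or.inr (Or.inr (Or.inl rfl))
    · exact Or.inr (Or.inr (Or.inr rfl))
  -- no vertex dominating C 0 lies in C 0
  have hTA : ∀ v, (∀ u ∈ C 0, G.Adj v u) → v ∉ C 0 := by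
    intro v hv hmem
    exact G.irrefl (hv v hmem)
  by_cases hA3 : ∃ t1 t2 t3 : V, t1 ≠ t2 ∧ t1 ≠ t3 ∧ t2 ≠ t3 ∧
      (∀ u ∈ C 0, G.Adj t1 u) ∧ (∀ u ∈ C 0, G.Adj t2 u) ∧ (∀ u ∈ C 0, G.Adj t3 u)
  · -- three distinct vertices dominate C 0 : build K_{3,3}
    obtain ⟨t1, t2, t3, h12, h13, h23, ht1, ht2, ht3⟩ := hA3
    obtain ⟨x1, x2, x3, hx1, hx2, hx3, hx12, hx13, hx23⟩ :=
      (Set.two_lt_ncard_iff (Set.toFinite _)).mp (by omega : 2 < (C 0).ncard)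
    have hxt : ∀ a, a ∈ C 0 → ∀ b, (∀ u ∈ C 0, G.Adj b u) → a ≠ b := by
      intro a ha b hb h
      subst h
      exact G.irrefl (hb a ha)
    have hxmem : ∀ i : Fin 3, ![x1, x2, x3] i ∈ C 0 := by
      intro i
      fin_cases i
      · exact hx1
      · exact hx2
      · exact hx3
    have htdom : ∀ j : Fin 3, ∀ u ∈ C 0, G.Adj (![t1, t2, t3] j) u := by
      intro j
      fin_cases j
      · exact ht1
      · exact ht2
      · exact ht3
    have hxinj : Function.Injective ![x1, x2, x3] := by
      intro i j h
      fin_cases i <;> fin_cases j <;>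
        first
        | rfl
        | exact absurd h hx12 | exact absurd h hx13 | exact absurd h hx23
        | exact absurd h.symm hx12 | exact absurd h.symm hx13 | exact absurd h.symm hx23
    have htinj : Function.Injective ![t1, t2, t3] := by
      intro i j h
      fin_cases i <;> fin_cases j <;>
        first
        | rfl
        | exact absurd h h12 | exact absurd h h13 | exact absurd h h23
        | exact absurd h.symm h12 | exact absurd h.symm h13 | exact absurd h.symm h23
    have hcross : ∀ i j : Fin 3, ![x1, x2, x3] i ≠ ![t1, t2, t3] j :=
      fun i j => hxt _ (hxmem i) _ (htdom j)
    refine ⟨Sum.elim (![x1, x2, x3]) (![t1, t2, t3]), ?_, ?_⟩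
    · intro a b hab
      rcases a with i | i <;> rcases b with j | j
      · exact congrArg Sum.inl (hxinj hab)
      · exact absurd hab (hcross i j)
      · exact absurd hab.symm (hcross j i)
      · exact congrArg Sum.inr (htinj hab)
    · intro a b hab
      rcases a with i | i <;> rcases b with j | j
      · simp at hab
      · exact (htdom j _ (hxmem i)).symm
      · exact htdom i _ (hxmem j)
      · simp at hab
  · -- otherwise we construct a dominating set of size ≤ 3, contradicting γ(G) = 4
    exfalso
    -- the three pairs
    obtain ⟨p1, p2, hp12, hPeq⟩ := Set.ncard_eq_two.mp h2
    obtain ⟨q1, q2, hq12, hQeq⟩ := Set.ncard_eq_two.mp h3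
    obtain ⟨r1, r2, hr12, hReq⟩ := Set.ncard_eq_two.mp h4
    have hp1 : p1 ∈ C 1 := by rw [hPeq]; simp
    have hp2 : p2 ∈ C 1 := by rw [hPeq]; simp
    have hq1 : q1 ∈ C 2 := by rw [hQeq]; simp
    have hq2 : q2 ∈ C 2 := by rw [hQeq]; simp
    have hr1 : r1 ∈ C 3 := by rw [hReq]; simp
    have hr2 : r2 ∈ C 3 := by rw [hReq]; simp
    have hP2 : ∀ v ∈ C 1, v = p1 ∨ v = p2 := by intro v hv; rw [hPeq] at hv; exact hv
    have hQ2 : ∀ v ∈ C 2, v = q1 ∨ v = q2 := by intro v hv; rw [hQeq] at hv; exact hv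
    have hR2 : ∀ v ∈ C 3, v = r1 ∨ v = r2 := by intro v hv; rw [hReq] at hv; exact hv
    obtain ⟨x0, hx0⟩ : (C 0).Nonempty := hne 0
    -- disjointness of classes
    have hdisj : ∀ v, ∀ i j : Fin 4, i ≠ j → v ∈ C i → v ∈ C j → False := by
      intro v i j hij hvi hvj
      obtain ⟨k, -, hk⟩ := hpart v
      exact hij ((hk i hvi).trans (hk j hvj).symm)
    -- no-three-distinct-dominators of C 0
    have hT : ∀ t1 t2 t3 : V, (∀ u ∈ C 0, G.Adj t1 u) → (∀ u ∈ C 0, G.Adj t2 u) →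
        (∀ u ∈ C 0, G.Adj t3 u) → t1 = t2 ∨ t1 = t3 ∨ t2 = t3 := by
      intro t1 t2 t3 ht1 ht2 ht3
      by_contra h
      push_neg at h
      exact hA3 ⟨t1, t2, t3, h.1, h.2.1, h.2.2, ht1, ht2, ht3⟩
    -- get the dominating set of size ≤ 3
    have hD : ∃ D : Set V, IsDomSet G D ∧ D.ncard ≤ 3 := by
      by_cases hPfull : (∀ u ∈ C 0, G.Adj p1 u) ∧ (∀ u ∈ C 0, G.Adj p2 u)
      · exact dom_hard G hconn (C 0) (C 1) (C 2) (C 3) hcover hdom'' hT x0 hx0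
          p1 p2 hp12 hp1 hp2 hP2 hPfull.1 hPfull.2 q1 q2 hq1 hq2 hQ2 r1 r2 hr1 hr2 hR2
          (fun h => hdisj p1 1 2 (by decide) hp1 h)
          (fun h => hdisj p1 1 3 (by decide) hp1 h)
      by_cases hQfull : (∀ u ∈ C 0, G.Adj q1 u) ∧ (∀ u ∈ C 0, G.Adj q2 u)
      · have hcover' : ∀ v, v ∈ C 0 ∨ v ∈ C 2 ∨ v ∈ C 1 ∨ v ∈ C 3 := fun v => by
          rcases hcover v with h | h | h | h <;> tauto
        have hdom''' : ∀ v, ∃ K, (K = C 0 ∨ K = C 2 ∨ K = C 1 ∨ K = C 3) ∧ v ∉ K ∧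
            ∀ u ∈ K, G.Adj v u := fun v => by
          obtain ⟨K, hK, ha, hb⟩ := hdom'' v
          exact ⟨K, by tauto, ha, hb⟩
        exact dom_hard G hconn (C 0) (C 2) (C 1) (C 3) hcover' hdom''' hT x0 hx0
          q1 q2 hq12 hq1 hq2 hQ2 hQfull.1 hQfull.2 p1 p2 hp1 hp2 hP2 r1 r2 hr1 hr2 hR2
          (fun h => hdisj q1 2 1 (by decide) hq1 h)
          (fun h => hdisj q1 2 3 (by decide) hq1 h)
      by_cases hRfull : (∀ u ∈ C 0, G.Adj r1 u) ∧ (∀ u ∈ C 0, G.Adj r2 u)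
      · have hcover' : ∀ v, v ∈ C 0 ∨ v ∈ C 3 ∨ v ∈ C 1 ∨ v ∈ C 2 := fun v => by
          rcases hcover v with h | h | h | h <;> tauto
        have hdom''' : ∀ v, ∃ K, (K = C 0 ∨ K = C 3 ∨ K = C 1 ∨ K = C 2) ∧ v ∉ K ∧
            ∀ u ∈ K, G.Adj v u := fun v => by
          obtain ⟨K, hK, ha, hb⟩ := hdom'' v
          exact ⟨K, by tauto, ha, hb⟩
        exact dom_hard G hconn (C 0) (C 3) (C 1) (C 2) hcover' hdom''' hT x0 hx0
          r1 r2 hr12 hr1 hr2 hR2 hRfull.1 hRfull.2 p1 p2 hp1 hp2 hP2 q1 q2 hq1 hq2 hQ2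
          (fun h => hdisj r1 3 1 (by decide) hr1 h)
          (fun h => hdisj r1 3 2 (by decide) hr1 h)
      · -- transversal case
        -- choose a representative of each pair containing all C0-dominators of that pair
        have pick : ∀ (a b : V) (S : Set V), a ∈ S → b ∈ S → (∀ v ∈ S, v = a ∨ v = b) →
            ((∀ u ∈ C 0, G.Adj a u) → ¬ (∀ u ∈ C 0, G.Adj b u)) →
            ∃ d, d ∈ S ∧ ∀ v ∈ S, (∀ u ∈ C 0, G.Adj v u) → v = d := by
          intro a b S ha hb hS hfull
          by_cases haT : ∀ u ∈ C 0, G.Adj a u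
          · refine ⟨a, ha, fun v hv hvT => ?_⟩
            rcases hS v hv with rfl | rfl
            · rfl
            · exact absurd hvT (hfull haT)
          · refine ⟨b, hb, fun v hv hvT => ?_⟩
            rcases hS v hv with rfl | rfl
            · exact absurd hvT haT
            · rfl
        obtain ⟨d1, hd1, hd1T⟩ := pick p1 p2 (C 1) hp1 hp2 hP2 (fun h1' h2' => hPfull ⟨h1', h2'⟩)
        obtain ⟨d2, hd2, hd2T⟩ := pick q1 q2 (C 2) hq1 hq2 hQ2 (fun h1' h2' => hQfull ⟨h1', h2'⟩)
        obtain ⟨d3, hd3, hd3T⟩ := pick r1 r2 (C 3) hr1 hr2 hR2 (fun h1' h2' => hRfull ⟨h1', h2'⟩)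
        refine dom_trans G (C 0) (C 1) (C 2) (C 3) hdom'' d1 d2 d3 hd1 hd2 hd3 ?_
        intro v hvT
        rcases hcover v with h | h | h | h
        · exact absurd h (hTA v hvT)
        · exact Or.inl (hd1T v h hvT)
        · exact Or.inr (Or.inl (hd2T v h hvT))
        · exact Or.inr (Or.inr (hd3T v h hvT))
    obtain ⟨D, hDdom, hD3⟩ := hD
    have hle : domNum G ≤ D.ncard := Nat.sInf_le ⟨D, hDdom, rfl⟩
    have := hDk.1
    omega
end

section
/- Let G be a connected D(4) graph admitting a dominator coloring C = (V_1, V_2, V_3, V_4) with exactly 4 color classes such that |V_i| ≥ 3 for every 1 ≤ i ≤ 4. Then G contains K_{3,3} as a subgraph, i.e., there is an injective graph homomorphism from K_{3,3} into G. -/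
open SimpleGraph

/-- If `G` is a connected `D(4)` graph with a dominator coloring
`C = (V_1, V_2, V_3, V_4)` with exactly 4 color classes such that `|V_i| ≥ 3`
for every `i`, then `G` contains `K_{3,3}` as a subgraph. -/
theorem stmt_17 {V : Type*} [Fintype V] (G : SimpleGraph V)
    (hconn : G.Connected) (hDk : IsDk G 4)
    (C : Fin 4 → Set V) (hC : IsDominatorColoring G C)
    (hsize : ∀ i : Fin 4, 3 ≤ (C i).ncard) :
    ∃ f : Fin 3 ⊕ Fin 3 → V, Function.Injective f ∧
      ∀ a b : Fin 3 ⊕ Fin 3,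
        (completeBipartiteGraph (Fin 3) (Fin 3)).Adj a b → G.Adj (f a) (f b) := by
  classical
  obtain ⟨⟨huniq, hne, hindep⟩, hdom⟩ := hC
  choose idx hidx using hdom
  -- every vertex is outside the class it dominates
  have hnot : ∀ v, v ∉ C (idx v) := by
    intro v hv
    have h1 : C (idx v) = {v} := by
      ext u
      simp only [Set.mem_singleton_iff]
      constructor
      · intro hu
        rcases hidx v u hu with h | h
        · exact h
        · exact absurd h (hindep _ v hv u hu)
      · rintro rfl; exact hv
    have h2 := hsize (idx v)
    rw [h1, Set.ncard_singleton] at h2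
    omega
  -- adjacency from domination
  have hadj : ∀ v, ∀ u ∈ C (idx v), G.Adj v u := by
    intro v u hu
    rcases hidx v u hu with h | h
    · exact absurd (h ▸ hu) (hnot v)
    · exact h
  -- card V ≥ 12
  have hcard : 12 ≤ Fintype.card V := by
    have hcup : (Finset.univ : Finset V) = Finset.univ.biUnion (fun i => (C i).toFinset) := by
      ext v
      simp only [Finset.mem_univ, Finset.mem_biUnion, Set.mem_toFinset, true_iff]
      obtain ⟨i, hi, -⟩ := huniq v
      exact ⟨i, trivial, hi⟩
    have hdisj : ∀ i ∈ (Finset.univ : Finset (Fin 4)), ∀ j ∈ (Finset.univ : Finset (Fin 4)),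
        i ≠ j → Disjoint (C i).toFinset (C j).toFinset := by
      intro i _ j _ hij
      rw [Finset.disjoint_left]
      intro v hvi hvj
      rw [Set.mem_toFinset] at hvi hvj
      obtain ⟨w, -, hu⟩ := huniq v
      exact hij ((hu i hvi).trans (hu j hvj).symm)
    have : Fintype.card V = ∑ i : Fin 4, ((C i).toFinset).card := by
      rw [← Finset.card_univ, hcup, Finset.card_biUnion hdisj]
    rw [this]
    have h3 : ∀ i : Fin 4, 3 ≤ ((C i).toFinset).card := by
      intro i
      have := hsize i
      rwa [Set.ncard_eq_toFinset_card'] at this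
    calc 12 = ∑ _i : Fin 4, 3 := by simp
    _ ≤ ∑ i : Fin 4, ((C i).toFinset).card := Finset.sum_le_sum (fun i _ => h3 i)
  -- pigeonhole: some class dominated by ≥ 3 vertices
  obtain ⟨j, hj⟩ := Fintype.exists_lt_card_fiber_of_mul_lt_card (f := idx) (n := 2)
    (by simpa using by omega : Fintype.card (Fin 4) * 2 < Fintype.card V)
  rw [Finset.two_lt_card_iff] at hj
  obtain ⟨w1, w2, w3, hw1, hw2, hw3, hww1, hww2, hww3⟩ := hj
  simp only [Finset.mem_filter, Finset.mem_univ, true_and] at hw1 hw2 hw3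
  -- three vertices in class j
  have hj3 : 2 < ((C j).toFinset).card := by
    have := hsize j; rw [Set.ncard_eq_toFinset_card'] at this; omega
  rw [Finset.two_lt_card_iff] at hj3
  obtain ⟨u1, u2, u3, hu1, hu2, hu3, huu1, huu2, huu3⟩ := hj3
  rw [Set.mem_toFinset] at hu1 hu2 hu3
  -- the w's are not in C j
  have hwn1 : w1 ∉ C j := hw1 ▸ hnot w1
  have hwn2 : w2 ∉ C j := hw2 ▸ hnot w2
  have hwn3 : w3 ∉ C j := hw3 ▸ hnot w3
  have ha1 : ∀ u ∈ C j, G.Adj w1 u := fun u hu => hadj w1 u (hw1 ▸ hu)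
  have ha2 : ∀ u ∈ C j, G.Adj w2 u := fun u hu => hadj w2 u (hw2 ▸ hu)
  have ha3 : ∀ u ∈ C j, G.Adj w3 u := fun u hu => hadj w3 u (hw3 ▸ hu)
  refine ⟨Sum.elim ![w1, w2, w3] ![u1, u2, u3], ?_, ?_⟩
  · have hne1 : w1 ≠ u1 := fun h => hwn1 (h ▸ hu1)
    have hne2 : w1 ≠ u2 := fun h => hwn1 (h ▸ hu2)
    have hne3 : w1 ≠ u3 := fun h => hwn1 (h ▸ hu3)
    have hne4 : w2 ≠ u1 := fun h => hwn2 (h ▸ hu1)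
    have hne5 : w2 ≠ u2 := fun h => hwn2 (h ▸ hu2)
    have hne6 : w2 ≠ u3 := fun h => hwn2 (h ▸ hu3)
    have hne7 : w3 ≠ u1 := fun h => hwn3 (h ▸ hu1)
    have hne8 : w3 ≠ u2 := fun h => hwn3 (h ▸ hu2)
    have hne9 : w3 ≠ u3 := fun h => hwn3 (h ▸ hu3)
    intro a b hab
    rcases a with a | a <;> rcases b with b | b <;>
      fin_cases a <;> fin_cases b <;> simp_all
  · intro a b hab
    rcases a with a | a <;> rcases b with b | b
    · simp at hab
    · fin_cases a <;> fin_cases b <;>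
        simp only [Sum.elim_inl, Sum.elim_inr, Matrix.cons_val_zero, Matrix.cons_val_one,
          Matrix.head_cons, Matrix.cons_val_two, Matrix.tail_cons] <;>
        first
        | exact ha1 _ hu1 | exact ha1 _ hu2 | exact ha1 _ hu3
        | exact ha2 _ hu1 | exact ha2 _ hu2 | exact ha2 _ hu3
        | exact ha3 _ hu1 | exact ha3 _ hu2 | exact ha3 _ hu3
    · fin_cases a <;> fin_cases b <;>
        simp only [Sum.elim_inl, Sum.elim_inr, Matrix.cons_val_zero, Matrix.cons_val_one,
          Matrix.head_cons, Matrix.cons_val_two, Matrix.tail_cons] <;>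
        first
        | exact (ha1 _ hu1).symm | exact (ha1 _ hu2).symm | exact (ha1 _ hu3).symm
        | exact (ha2 _ hu1).symm | exact (ha2 _ hu2).symm | exact (ha2 _ hu3).symm
        | exact (ha3 _ hu1).symm | exact (ha3 _ hu2).symm | exact (ha3 _ hu3).symm
    · simp at hab
end
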